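/- arXiv:1501.00622 — 11 statements merged into one kernel-verified Lean document; each statement's English description precedes it below -/
import Mathlib

section
/- Let p : ℝ → ℝ satisfy p(0) = 0, p non-decreasing on [0,∞), and p concave on [0,τ] for some τ > 0. Then for every integer l ≥ 2 and all real numbers t_1, …, t_l, one has p(|t_1|) + ⋯ + p(|t_l|) ≥ min{ p(|t_1 + ⋯ + t_l|), p(τ) }. -/
/-!
A concave function on `[0, τ]` that is nonnegative at `0` is subadditive there. Together with
monotonicity this makes the truncation `s ↦ p (min |s| τ)` subadditive on all of `ℝ`, so it is
bounded on `∑ tᵢ` by the sum of its values at the `tᵢ`. Its value at `∑ tᵢ` is at least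
`min (p |∑ tᵢ|) (p τ)`, and its value at each `tᵢ` at most `p |tᵢ|`.
-/

open Set

theorem ConcaveOn.smul_apply_le_apply_smul {𝕜 E β : Type*} [Ring 𝕜] [PartialOrder 𝕜]
    [IsOrderedRing 𝕜] [AddCommGroup E] [Module 𝕜 E] [AddCommGroup β] [PartialOrder β]
    [IsOrderedAddMonoid β] [Module 𝕜 β] [PosSMulMono 𝕜 β] {s : Set E} {f : E → β}
    (hf : ConcaveOn 𝕜 s f) (h0 : (0 : E) ∈ s) (hf0 : 0 ≤ f 0) {x : E} (hx : x ∈ s) {c : 𝕜}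
    (hc0 : 0 ≤ c) (hc1 : c ≤ 1) : c • f x ≤ f (c • x) := by
  have h := hf.2 h0 hx (sub_nonneg.2 hc1) hc0 (sub_add_cancel 1 c)
  rw [smul_zero, zero_add] at h
  exact le_add_of_nonneg_left (smul_nonneg (sub_nonneg.2 hc1) hf0) |>.trans h

namespace ConcaveOn

variable {f : ℝ → ℝ} {τ : ℝ}

theorem apply_add_le (hf : ConcaveOn ℝ (Icc 0 τ) f) (hf0 : 0 ≤ f 0) {a b : ℝ} (ha : 0 ≤ a)
    (hb : 0 ≤ b) (hab : a + b ≤ τ) : f (a + b) ≤ f a + f b := by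
  rcases (add_nonneg ha hb).eq_or_lt with hab0 | hab0
  · obtain ⟨rfl, rfl⟩ : a = 0 ∧ b = 0 := ⟨by linarith, by linarith⟩
    simpa using hf0
  have hmem : a + b ∈ Icc 0 τ := ⟨hab0.le, hab⟩
  have h0 : (0 : ℝ) ∈ Icc 0 τ := ⟨le_rfl, (add_nonneg ha hb).trans hab⟩
  have hfrac (c : ℝ) (hc : 0 ≤ c) (hcab : c ≤ a + b) : c / (a + b) * f (a + b) ≤ f c := by
    have h := hf.smul_apply_le_apply_smul h0 hf0 hmem (div_nonneg hc hab0.le)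
      ((div_le_one hab0).2 hcab)
    rwa [smul_eq_mul, smul_eq_mul, div_mul_cancel₀ c hab0.ne'] at h
  calc f (a + b) = a / (a + b) * f (a + b) + b / (a + b) * f (a + b) := by
        field_simp
    _ ≤ f a + f b := add_le_add (hfrac a ha (by linarith)) (hfrac b hb (by linarith))

theorem apply_min_add_le (hf : ConcaveOn ℝ (Icc 0 τ) f) (hmono : MonotoneOn f (Icc 0 τ))
    (hf0 : 0 ≤ f 0) {x y : ℝ} (hx : x ∈ Icc 0 τ) (hy : y ∈ Icc 0 τ) :
    f (min (x + y) τ) ≤ f x + f y := by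
  set z := min (x + y) τ - x with hz
  have hz0 : 0 ≤ z := by rw [hz, sub_nonneg]; exact le_min (by linarith [hy.1]) hx.2
  have hzy : z ≤ y := by rw [hz, sub_le_iff_le_add']; exact min_le_left _ _
  calc f (min (x + y) τ) = f (x + z) := by rw [hz, add_sub_cancel]
    _ ≤ f x + f z :=
        hf.apply_add_le hf0 hx.1 hz0 (by rw [hz, add_sub_cancel]; exact min_le_right _ _)
    _ ≤ f x + f y := add_le_add_right (hmono ⟨hz0, hzy.trans hy.2⟩ hy hzy) _

theorem apply_min_abs_add_le (hf : ConcaveOn ℝ (Icc 0 τ) f) (hmono : MonotoneOn f (Icc 0 τ))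
    (hf0 : 0 ≤ f 0) (hτ : 0 ≤ τ) (x y : ℝ) :
    f (min |x + y| τ) ≤ f (min |x| τ) + f (min |y| τ) := by
  have hmem (s : ℝ) : min |s| τ ∈ Icc 0 τ := ⟨le_min (abs_nonneg s) hτ, min_le_right _ _⟩
  have hle : min |x + y| τ ≤ min (min |x| τ + min |y| τ) τ := by
    refine le_min ?_ (min_le_right _ _)
    rcases le_total |x| τ with hx | hx <;> rcases le_total |y| τ with hy | hy <;>
      simp only [min_eq_left, min_eq_right, *] <;>
      linarith [abs_add_le x y, min_le_left |x + y| τ, min_le_right |x + y| τ, abs_nonneg x,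
        abs_nonneg y]
  calc f (min |x + y| τ) ≤ f (min (min |x| τ + min |y| τ) τ) :=
        hmono (hmem _) ⟨le_min (add_nonneg (hmem x).1 (hmem y).1) hτ, min_le_right _ _⟩ hle
    _ ≤ f (min |x| τ) + f (min |y| τ) := hf.apply_min_add_le hmono hf0 (hmem x) (hmem y)

end ConcaveOn

theorem stmt_0_general (p : ℝ → ℝ) (τ : ℝ) (hτ : 0 < τ)
    (hp0 : p 0 = 0)
    (hmono : MonotoneOn p (Set.Ici 0))
    (hconc : ConcaveOn ℝ (Set.Icc 0 τ) p)
    (l : ℕ) (t : Fin l → ℝ) :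
    min (p |∑ i, t i|) (p τ) ≤ ∑ i, p |t i| := by
  have hmonoIcc : MonotoneOn p (Icc 0 τ) := hmono.mono Icc_subset_Ici_self
  have htrunc_sum : p (min |∑ i, t i| τ) ≤ ∑ i, p (min |t i| τ) :=
    Finset.le_sum_of_subadditive (fun s ↦ p (min |s| τ)) (by simp [min_eq_left hτ.le, hp0])
      (hconc.apply_min_abs_add_le hmonoIcc hp0.ge hτ.le) _ t
  have hmin_le : min (p |∑ i, t i|) (p τ) ≤ p (min |∑ i, t i| τ) := by
    rcases le_total |∑ i, t i| τ with h | h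
    · rw [min_eq_left h]; exact min_le_left _ _
    · rw [min_eq_right h]; exact min_le_right _ _
  have htrunc_le (s : ℝ) : p (min |s| τ) ≤ p |s| :=
    hmono (le_min (abs_nonneg s) hτ.le) (abs_nonneg s) (min_le_left _ _)
  exact hmin_le.trans (htrunc_sum.trans (Finset.sum_le_sum fun i _ ↦ htrunc_le (t i)))

/-- Lemma 1 of the paper: for a penalty function `p` with `p 0 = 0`, non-decreasing on
`[0, ∞)` and concave on `[0, τ]` (`τ > 0`), for any `l ≥ 2` reals `t₁, …, t_l`,
`p |t₁| + ⋯ + p |t_l| ≥ min (p |t₁ + ⋯ + t_l|) (p τ)`. -/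
theorem stmt_0 (p : ℝ → ℝ) (τ : ℝ) (hτ : 0 < τ)
    (hp0 : p 0 = 0)
    (hmono : MonotoneOn p (Set.Ici 0))
    (hconc : ConcaveOn ℝ (Set.Icc 0 τ) p)
    (l : ℕ) (hl : 2 ≤ l) (t : Fin l → ℝ) :
    min (p |∑ i, t i|) (p τ) ≤ ∑ i, p |t i| :=
  stmt_0_general p τ hτ hp0 hmono hconc l t
end

section
/- Let p : ℝ → ℝ satisfy p(0) = 0 and suppose p is concave but not linear on [0, τ₀] for some τ₀ > 0. Then C₁ := (p(τ₀/3) + p(2τ₀/3) − p(τ₀)) / (τ₀/3) is strictly positive, i.e., p(τ₀/3) + p(2τ₀/3) > p(τ₀). -/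
/-!
Subtracting the chord `t ↦ (p τ₀ / τ₀) t` leaves a concave function `q` vanishing at `0` and
`τ₀`, hence nonnegative on `[0, τ₀]`, and `p (τ₀/3) + p (2τ₀/3) - p τ₀ = q (τ₀/3) + q (2τ₀/3)`.
If this sum were `≤ 0`, then `q (τ₀/3) = 0`; but a nonnegative concave function vanishing at an
interior point vanishes everywhere, so `p` would be linear on `[0, τ₀]`.
-/

open Set

section

variable {𝕜 E : Type*} [Field 𝕜] [LinearOrder 𝕜] [IsStrictOrderedRing 𝕜]
  [AddCommGroup E] [Module 𝕜 E] {s : Set E} {f : E → 𝕜} {x y z : E}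

theorem ConcaveOn.eq_zero_of_mem_openSegment (hf : ConcaveOn 𝕜 s f) (hnonneg : ∀ w ∈ s, 0 ≤ f w)
    (hx : x ∈ s) (hy : y ∈ s) (hz : z ∈ openSegment 𝕜 x y) (hfz : f z = 0) : f x = 0 := by
  obtain ⟨a, b, ha, hb, hab, rfl⟩ := hz
  have hconc : a * f x + b * f y ≤ 0 := hfz ▸ hf.2 hx hy ha.le hb.le hab
  have hax : a * f x = 0 :=
    le_antisymm (by linarith [mul_nonneg hb.le (hnonneg y hy)]) (mul_nonneg ha.le (hnonneg x hx))
  exact (mul_eq_zero.1 hax).resolve_left ha.ne'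

end

section

variable {𝕜 : Type*} [Field 𝕜] [LinearOrder 𝕜] [IsStrictOrderedRing 𝕜] {f : 𝕜 → 𝕜} {a b x : 𝕜}

theorem ConcaveOn.eqOn_zero_of_eq_zero_of_mem_Ioo (hf : ConcaveOn 𝕜 (Icc a b) f)
    (hnonneg : ∀ t ∈ Icc a b, 0 ≤ f t) (hx : x ∈ Ioo a b) (hfx : f x = 0) :
    EqOn f 0 (Icc a b) := by
  intro t ht
  rcases lt_trichotomy t x with htx | rfl | hxt
  · refine hf.eq_zero_of_mem_openSegment hnonneg ht (right_mem_Icc.2 (hx.1.trans hx.2).le) ?_ hfx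
    rw [openSegment_eq_Ioo (htx.trans hx.2)]
    exact ⟨htx, hx.2⟩
  · exact hfx
  · refine hf.eq_zero_of_mem_openSegment hnonneg ht (left_mem_Icc.2 (hx.1.trans hx.2).le) ?_ hfx
    rw [openSegment_symm, openSegment_eq_Ioo (hx.1.trans hxt)]
    exact ⟨hx.1, hxt⟩

end

/-- From the proof of Lemma 2: if `p 0 = 0` and `p` is concave but not linear on
`[0, τ₀]`, then `C₁ := (p (τ₀/3) + p (2τ₀/3) − p τ₀) / (τ₀/3) > 0`, i.e.
`p (τ₀/3) + p (2τ₀/3) > p τ₀`. -/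
theorem stmt_3 (p : ℝ → ℝ) (τ₀ : ℝ) (hτ₀ : 0 < τ₀)
    (hp0 : p 0 = 0)
    (hconc : ConcaveOn ℝ (Set.Icc 0 τ₀) p)
    (hnotlin : ¬ ∃ c : ℝ, ∀ t ∈ Set.Icc (0 : ℝ) τ₀, p t = c * t) :
    0 < (p (τ₀ / 3) + p (2 * τ₀ / 3) - p τ₀) / (τ₀ / 3) ∧
      p τ₀ < p (τ₀ / 3) + p (2 * τ₀ / 3) := by
  set c := p τ₀ / τ₀
  set q : ℝ → ℝ := fun t => p t - c * t
  have hq : ConcaveOn ℝ (Icc 0 τ₀) q :=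
    hconc.sub ((LinearMap.mulLeft ℝ c).convexOn (convex_Icc 0 τ₀))
  have hq0 : q 0 = 0 := by simp [q, hp0]
  have hqτ₀ : q τ₀ = 0 := by simp [q, c, hτ₀.ne']
  have hq_nonneg : ∀ t ∈ Icc 0 τ₀, 0 ≤ q t := fun t ht => by
    simpa [hq0, hqτ₀] using hq.ge_on_segment (left_mem_Icc.2 hτ₀.le) (right_mem_Icc.2 hτ₀.le)
      (by rwa [segment_eq_Icc hτ₀.le])
  have hlt : p τ₀ < p (τ₀ / 3) + p (2 * τ₀ / 3) := by
    by_contra! hle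
    have hsum : q (τ₀ / 3) + q (2 * τ₀ / 3) = p (τ₀ / 3) + p (2 * τ₀ / 3) - p τ₀ := by
      simp only [q, c]; field_simp; ring
    have hq23 := hq_nonneg (2 * τ₀ / 3) ⟨by positivity, by linarith⟩
    have hq13 := hq_nonneg (τ₀ / 3) ⟨by positivity, by linarith⟩
    have hzero := hq.eqOn_zero_of_eq_zero_of_mem_Ioo hq_nonneg (x := τ₀ / 3)
      ⟨by positivity, by linarith⟩ (by linarith)
    exact hnotlin ⟨c, fun t ht => sub_eq_zero.1 (hzero ht)⟩
  exact ⟨div_pos (sub_pos.2 hlt) (by positivity), hlt⟩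
end

section
/- Let p : ℝ → ℝ satisfy p(0) = 0, p non-decreasing on [0,∞), p concave on [0,τ], and p not linear on [0,τ₀], where 0 < τ₀ < τ. Set C₁ := (p(τ₀/3) + p(2τ₀/3) − p(τ₀)) / (τ₀/3). Fix t̃ ∈ (τ₀, τ) and let δ̄ := min{ τ₀/3, t̃ − τ₀, τ − t̃ }. Then for every δ ∈ (0, δ̄), every integer l ≥ 2, and all reals t_1, …, t_l with t_1 + ⋯ + t_l = t̃: if p(|t_1|) + ⋯ + p(|t_l|) < p(t̃) + C₁·δ, then there exists an index i such that |t_i − t̃| < δ and |t_j| < δ for all j ≠ i. -/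
/-!
Concavity on `[0, τ]` and `p 0 = 0` make `x ↦ p (min x τ)` subadditive on `[0, ∞)`, so the
penalty `∑ p |tᵢ|` dominates `p u + p v` whenever the `|tᵢ|` split into two groups of masses at
least `u` and `v`. If the localization fails, such a split with `u, v ≥ δ` and `u + v = t̃` exists:
either two coordinates have size at least `δ`, or all but the largest one are `δ`-small and
together carry mass at least `δ`, and then a subfamily of mass in `[δ, 2δ)` can be cut off
greedily. Concavity finally gives `p u + p v ≥ p δ + p (t̃ - δ) ≥ p t̃ + C₁ δ`, where
`C₁ = subadditivityDefect p τ₀`.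
-/

open Finset Set

theorem ConcaveOn.chord_le_mul {s : Set ℝ} {f : ℝ → ℝ} (hf : ConcaveOn ℝ s f) {a b x : ℝ}
    (ha : a ∈ s) (hb : b ∈ s) (hax : a ≤ x) (hxb : x ≤ b) :
    (b - x) * f a + (x - a) * f b ≤ (b - a) * f x := by
  rcases hax.eq_or_lt with rfl | hax
  · ring_nf; rfl
  rcases hxb.eq_or_lt with rfl | hxb
  · ring_nf; rfl
  have := hf.neg.secant_mono_aux1 ha hb hax hxb
  simp only [Pi.neg_apply] at this
  linarith

theorem ConcaveOn.add_le_add_of_add_eq {s : Set ℝ} {f : ℝ → ℝ} (hf : ConcaveOn ℝ s f)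
    {a b c d : ℝ} (ha : a ∈ s) (hd : d ∈ s) (hab : a ≤ b) (hac : a ≤ c) (h : a + d = b + c) :
    f a + f d ≤ f b + f c := by
  rcases (show a ≤ d by linarith).eq_or_lt with rfl | had
  · obtain rfl : b = a := by linarith
    obtain rfl : c = b := by linarith
    rfl
  have hb := hf.chord_le_mul ha hd hab (by linarith)
  have hc := hf.chord_le_mul ha hd hac (by linarith)
  refine le_of_mul_le_mul_left ?_ (sub_pos.2 had)
  linear_combination hb + hc + (f d - f a) * h

noncomputable def subadditivityDefect (p : ℝ → ℝ) (τ₀ : ℝ) : ℝ :=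
  (p (τ₀ / 3) + p (2 * τ₀ / 3) - p τ₀) / (τ₀ / 3)

section Penalty

variable {p : ℝ → ℝ} {τ : ℝ}

theorem map_min_add_le_add (hp0 : p 0 = 0) (hmono : MonotoneOn p (Ici 0))
    (hconc : ConcaveOn ℝ (Icc 0 τ) p) (hτ : 0 ≤ τ) {x y : ℝ} (hx : 0 ≤ x) (hy : 0 ≤ y) :
    p (min (x + y) τ) ≤ p (min x τ) + p (min y τ) := by
  set x' := min x τ
  set y' := min (min y τ) (τ - x')
  have hx' : 0 ≤ x' := le_min hx hτ
  have hy' : 0 ≤ y' := le_min (le_min hy hτ) (by simp [x'])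
  have hcap : min (x + y) τ = x' + y' := by
    simp only [x', y', min_def]; split_ifs <;> linarith
  have hsub : p (x' + y') ≤ p x' + p y' := by
    simpa [hp0] using hconc.add_le_add_of_add_eq (a := 0) (d := x' + y')
      ⟨le_rfl, hτ⟩ ⟨by linarith, hcap ▸ min_le_right _ _⟩ hx' hy' (zero_add _)
  have hmono' : p y' ≤ p (min y τ) := hmono hy' (le_min hy hτ) (min_le_left _ _)
  rw [hcap]
  linarith

theorem le_sum_map_of_le_sum (hp0 : p 0 = 0) (hmono : MonotoneOn p (Ici 0))
    (hconc : ConcaveOn ℝ (Icc 0 τ) p) {ι : Type*} {s : Finset ι} {a : ι → ℝ}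
    (ha : ∀ i ∈ s, 0 ≤ a i) {x : ℝ} (hx : 0 ≤ x) (hxτ : x ≤ τ) (hxs : x ≤ ∑ i ∈ s, a i) :
    p x ≤ ∑ i ∈ s, p (a i) := by
  have hτ : 0 ≤ τ := hx.trans hxτ
  calc p x ≤ p (min (∑ i ∈ s, a i) τ) :=
        hmono hx (le_min (sum_nonneg ha) hτ) (le_min hxs hxτ)
    _ ≤ ∑ i ∈ s, p (min (a i) τ) :=
        le_sum_of_subadditive_on_pred (fun y => p (min y τ)) (0 ≤ ·) (by simp [hτ, hp0])
          (fun _ _ => map_min_add_le_add hp0 hmono hconc hτ) (fun _ _ => add_nonneg) a ha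
    _ ≤ ∑ i ∈ s, p (a i) :=
        sum_le_sum fun i hi => hmono (le_min (ha i hi) hτ) (ha i hi) (min_le_left _ _)

/-- The splitting `s = d + (s - d)` gains at least `subadditivityDefect p τ₀ * d`: by concavity the
gain of splitting off `d` is at least `d / (τ₀ / 3)` times that of splitting off `τ₀ / 3`, which in
turn is at least the gain of `τ₀ = τ₀ / 3 + 2 τ₀ / 3`. -/
theorem add_subadditivityDefect_mul_le (hp0 : p 0 = 0) (hconc : ConcaveOn ℝ (Icc 0 τ) p)
    {τ₀ s d : ℝ} (hd : 0 < d) (hdτ₀ : 3 * d ≤ τ₀) (hτ₀s : τ₀ ≤ s) (hsτ : s ≤ τ) :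
    p s + subadditivityDefect p τ₀ * d ≤ p d + p (s - d) := by
  have h₁ := hconc.chord_le_mul (a := 0) (b := τ₀ / 3) (x := d)
    ⟨le_rfl, by linarith⟩ ⟨by linarith, by linarith⟩ hd.le (by linarith)
  have h₂ := hconc.chord_le_mul (a := s - τ₀ / 3) (b := s) (x := s - d)
    ⟨by linarith, by linarith⟩ ⟨by linarith, hsτ⟩ (by linarith) (by linarith)
  have h₃ := hconc.add_le_add_of_add_eq (a := 2 * τ₀ / 3) (d := s) (b := τ₀) (c := s - τ₀ / 3)
    ⟨by linarith, by linarith⟩ ⟨by linarith, hsτ⟩ (by linarith) (by linarith) (by ring)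
  have hdefect : τ₀ / 3 * (subadditivityDefect p τ₀ * d)
      = d * (p (τ₀ / 3) + p (2 * τ₀ / 3) - p τ₀) := by
    have : τ₀ ≠ 0 := by linarith
    unfold subadditivityDefect; field_simp
  rw [hp0] at h₁
  refine le_of_mul_le_mul_left ?_ (by linarith : 0 < τ₀ / 3)
  nlinarith [mul_le_mul_of_nonneg_left h₃ hd.le]

theorem add_subadditivityDefect_mul_le_sum (hp0 : p 0 = 0) (hmono : MonotoneOn p (Ici 0))
    (hconc : ConcaveOn ℝ (Icc 0 τ) p) {ι : Type*} [Fintype ι] [DecidableEq ι] {a : ι → ℝ}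
    (ha : ∀ i, 0 ≤ a i) {τ₀ T δ : ℝ} (hδ : 0 < δ) (hδτ₀ : 3 * δ ≤ τ₀) (hτ₀T : τ₀ ≤ T)
    (hTτ : T ≤ τ) (hTa : T ≤ ∑ i, a i) (S : Finset ι) (hS : δ ≤ ∑ i ∈ S, a i)
    (hSc : δ ≤ ∑ i ∈ Sᶜ, a i) :
    p T + subadditivityDefect p τ₀ * δ ≤ ∑ i, p (a i) := by
  rw [← sum_add_sum_compl S a] at hTa
  rw [← sum_add_sum_compl S]
  set u := min (∑ i ∈ S, a i) (T - δ)
  have hu : δ ≤ u := le_min hS (by linarith)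
  have huT : u ≤ T - δ := min_le_right _ _
  have hvSc : T - u ≤ ∑ i ∈ Sᶜ, a i := by
    simp only [u, min_def]; split_ifs <;> linarith
  have hpu : p u ≤ ∑ i ∈ S, p (a i) :=
    le_sum_map_of_le_sum hp0 hmono hconc (fun i _ => ha i) (by linarith) (by linarith)
      (min_le_left _ _)
  have hpv : p (T - u) ≤ ∑ i ∈ Sᶜ, p (a i) :=
    le_sum_map_of_le_sum hp0 hmono hconc (fun i _ => ha i) (by linarith) (by linarith) hvSc
  have hgap : p T + subadditivityDefect p τ₀ * δ ≤ p u + p (T - u) :=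
    (add_subadditivityDefect_mul_le hp0 hconc hδ hδτ₀ hτ₀T hTτ).trans
      (hconc.add_le_add_of_add_eq ⟨hδ.le, by linarith⟩ ⟨by linarith, by linarith⟩ hu
        (by linarith) (by ring))
  linarith

end Penalty

theorem Finset.exists_subset_sum_mem_Ico {ι M : Type*} [AddCommGroup M] [LinearOrder M]
    [IsOrderedAddMonoid M] (s : Finset ι) (a : ι → M) {c ε : M}
    (hc : 0 < c) (hsmall : ∀ j ∈ s, a j < ε) (hs : c ≤ ∑ j ∈ s, a j) :
    ∃ S ⊆ s, c ≤ ∑ j ∈ S, a j ∧ ∑ j ∈ S, a j < c + ε := by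
  induction s using Finset.cons_induction with
  | empty => exact absurd (hs.trans_eq sum_empty) hc.not_ge
  | cons j s hj ih =>
    rw [forall_mem_cons] at hsmall
    by_cases hc' : c ≤ ∑ i ∈ s, a i
    · obtain ⟨S, hSs, hS⟩ := ih hsmall.2 hc'
      exact ⟨S, hSs.trans (subset_cons hj), hS⟩
    · refine ⟨cons j s hj, Subset.rfl, hs, ?_⟩
      rw [sum_cons, add_comm c]
      exact add_lt_add hsmall.1 (not_le.1 hc')

theorem exists_localized_or_exists_split {ι : Type*} [Fintype ι] [DecidableEq ι] (t : ι → ℝ)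
    {T δ : ℝ} (hsum : ∑ i, t i = T) (hδ : 0 < δ) (hδT : 3 * δ ≤ T) :
    (∃ i, |t i - T| < δ ∧ ∀ j, j ≠ i → |t j| < δ) ∨
      ∃ S : Finset ι, δ ≤ ∑ i ∈ S, |t i| ∧ δ ≤ ∑ i ∈ Sᶜ, |t i| := by
  have hTabs : T ≤ ∑ i, |t i| := hsum ▸ (le_abs_self _).trans (abs_sum_le_sum_abs _ _)
  have hne : (univ : Finset ι).Nonempty := by
    by_contra h
    rw [Finset.not_nonempty_iff_eq_empty] at h
    rw [h, sum_empty] at hsum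
    linarith
  obtain ⟨i₀, -, hmax⟩ := univ.exists_max_image (fun i => |t i|) hne
  by_cases hbig : ∃ j, j ≠ i₀ ∧ δ ≤ |t j|
  · obtain ⟨j, hj, hδj⟩ := hbig
    refine Or.inr ⟨{i₀}, ?_, ?_⟩
    · simpa using hδj.trans (hmax j (mem_univ _))
    · exact hδj.trans (single_le_sum (fun i _ => abs_nonneg (t i)) (by simpa using hj))
  push Not at hbig
  by_cases hloc : |t i₀ - T| < δ
  · exact Or.inl ⟨i₀, hloc, hbig⟩
  have hrest : δ ≤ ∑ j ∈ univ.erase i₀, |t j| :=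
    calc δ ≤ |t i₀ - T| := not_lt.1 hloc
      _ = |∑ j ∈ univ.erase i₀, t j| := by
        rw [sum_erase_eq_sub (mem_univ _), hsum, abs_sub_comm]
      _ ≤ ∑ j ∈ univ.erase i₀, |t j| := abs_sum_le_sum_abs _ _
  obtain ⟨S, -, hS, hS2⟩ := (univ.erase i₀).exists_subset_sum_mem_Ico (fun j => |t j|) hδ
    (fun j hj => hbig j (ne_of_mem_erase hj)) hrest
  refine Or.inr ⟨S, hS, ?_⟩
  have := sum_add_sum_compl S (fun i => |t i|)
  linarith

theorem stmt_4_general (p : ℝ → ℝ) (τ τ₀ ttil : ℝ)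
    (hp0 : p 0 = 0)
    (hmono : MonotoneOn p (Set.Ici 0))
    (hconc : ConcaveOn ℝ (Set.Icc 0 τ) p)
    (httil : ttil ∈ Set.Ioo τ₀ τ)
    (δ : ℝ) (hδ0 : 0 < δ)
    (hδ : δ < min (τ₀ / 3) (min (ttil - τ₀) (τ - ttil)))
    (l : ℕ) (t : Fin l → ℝ)
    (hsum : ∑ i, t i = ttil)
    (hlt : ∑ i, p |t i| <
      p ttil + ((p (τ₀ / 3) + p (2 * τ₀ / 3) - p τ₀) / (τ₀ / 3)) * δ) :
    ∃ i, |t i - ttil| < δ ∧ ∀ j, j ≠ i → |t j| < δ := by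
  obtain ⟨hτ₀ttil, httilτ⟩ := httil
  have hδτ₀ : 3 * δ ≤ τ₀ := by linarith [min_le_left (τ₀ / 3) (min (ttil - τ₀) (τ - ttil))]
  refine (exists_localized_or_exists_split t hsum hδ0 (by linarith)).resolve_right ?_
  rintro ⟨S, hS, hSc⟩
  have hTabs : ttil ≤ ∑ i, |t i| := hsum ▸ (le_abs_self _).trans (abs_sum_le_sum_abs _ _)
  exact hlt.not_ge <| add_subadditivityDefect_mul_le_sum hp0 hmono hconc (fun i => abs_nonneg _)
    hδ0 hδτ₀ hτ₀ttil.le httilτ.le hTabs S hS hSc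

/-- Main localization assertion of Lemma 2 of the paper. -/
theorem stmt_4 (p : ℝ → ℝ) (τ τ₀ ttil : ℝ)
    (hτ₀ : 0 < τ₀) (hτ : τ₀ < τ)
    (hp0 : p 0 = 0)
    (hmono : MonotoneOn p (Set.Ici 0))
    (hconc : ConcaveOn ℝ (Set.Icc 0 τ) p)
    (hnotlin : ¬ ∃ c : ℝ, ∀ t ∈ Set.Icc (0 : ℝ) τ₀, p t = c * t)
    (httil : ttil ∈ Set.Ioo τ₀ τ)
    (δ : ℝ) (hδ0 : 0 < δ)
    (hδ : δ < min (τ₀ / 3) (min (ttil - τ₀) (τ - ttil)))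
    (l : ℕ) (hl : 2 ≤ l) (t : Fin l → ℝ)
    (hsum : ∑ i, t i = ttil)
    (hlt : ∑ i, p |t i| <
      p ttil + ((p (τ₀ / 3) + p (2 * τ₀ / 3) - p τ₀) / (τ₀ / 3)) * δ) :
    ∃ i, |t i - ttil| < δ ∧ ∀ j, j ≠ i → |t j| < δ :=
  stmt_4_general p τ τ₀ ttil hp0 hmono hconc httil δ hδ0 hδ l t hsum hlt
end

section
/- Let p : ℝ → ℝ satisfy p(0) = 0 and p concave on [0, τ₀] for some τ₀ > 0. Then the function s ↦ (p(s) + p(τ₀ − s) − p(τ₀)) / s is non-increasing on (0, τ₀]: for all 0 < s₁ ≤ s₂ ≤ τ₀, (p(s₁) + p(τ₀ − s₁) − p(τ₀))/s₁ ≥ (p(s₂) + p(τ₀ − s₂) − p(τ₀))/s₂. -/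
/-! Write the quotient as `p s / s + (p (τ₀ - s) - p τ₀) / s`. Since `p 0 = 0`, the first term is the
slope of the secant of `p` through `0` and `s`, and the second is minus the slope of the secant
through `τ₀ - s` and `τ₀`. Secant slopes of a concave function decrease as either endpoint moves
right, so both terms are non-increasing in `s`. -/

open Set

namespace ConcaveOn

variable {s : Set ℝ} {f : ℝ → ℝ}

theorem antitoneOn_div_self (hf : ConcaveOn ℝ s f) (h₀ : 0 ∈ s) (hf₀ : f 0 = 0) :
    AntitoneOn (fun x ↦ f x / x) (s \ {0}) := by
  have hslope : slope f 0 = fun x ↦ f x / x := by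
    ext x
    simp [slope_def_field, hf₀]
  simpa [hslope] using hf.slope_anti h₀

theorem antitoneOn_sub_div_self (hf : ConcaveOn ℝ s f) {a : ℝ} (ha : a ∈ s) :
    AntitoneOn (fun t ↦ (f (a - t) - f a) / t) ((a - ·) ⁻¹' s \ {0}) := by
  intro t₁ ht₁ t₂ ht₂ ht
  have hmem : ∀ {t}, t ∈ (a - ·) ⁻¹' s \ {0} → a - t ∈ s \ {a} := fun ⟨hs, h0⟩ ↦
    ⟨hs, fun h ↦ h0 (by simp_all)⟩
  have key := hf.slope_anti ha (hmem ht₂) (hmem ht₁) (by linarith)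
  have hslope : ∀ t, slope f a (a - t) = -((f (a - t) - f a) / t) := fun t ↦ by
    rw [slope_def_field, sub_sub_cancel_left, div_neg]
  simp only [hslope] at key
  linarith

end ConcaveOn

theorem stmt_5_general (p : ℝ → ℝ) (τ₀ : ℝ)
    (hp0 : p 0 = 0)
    (hconc : ConcaveOn ℝ (Set.Icc 0 τ₀) p)
    (s₁ s₂ : ℝ) (h1 : 0 < s₁) (h12 : s₁ ≤ s₂) (h2 : s₂ ≤ τ₀) :
    (p s₂ + p (τ₀ - s₂) - p τ₀) / s₂ ≤ (p s₁ + p (τ₀ - s₁) - p τ₀) / s₁ := by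
  have hs₂ : 0 < s₂ := h1.trans_le h12
  have hmem : ∀ {s}, 0 < s → s ≤ τ₀ → s ∈ Icc 0 τ₀ \ {0} ∧ s ∈ (τ₀ - ·) ⁻¹' Icc 0 τ₀ \ {0} :=
    fun hs hsτ ↦ ⟨⟨⟨hs.le, hsτ⟩, hs.ne'⟩, ⟨⟨by simpa using hsτ, by linarith⟩, hs.ne'⟩⟩
  obtain ⟨hA₁, hB₁⟩ := hmem h1 (h12.trans h2)
  obtain ⟨hA₂, hB₂⟩ := hmem hs₂ h2
  have hτ₀ : τ₀ ∈ Icc 0 τ₀ := ⟨by linarith, le_rfl⟩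
  have hA := hconc.antitoneOn_div_self ⟨le_rfl, by linarith⟩ hp0 hA₁ hA₂ h12
  have hB := hconc.antitoneOn_sub_div_self hτ₀ hB₁ hB₂ h12
  simp only [add_sub_assoc, add_div]
  exact add_le_add hA hB

/-- Property (iii) in the proof of Lemma 2: if `p 0 = 0` and `p` is concave on
`[0, τ₀]`, then `s ↦ (p s + p (τ₀ − s) − p τ₀) / s` is non-increasing on `(0, τ₀]`. -/
theorem stmt_5 (p : ℝ → ℝ) (τ₀ : ℝ) (hτ₀ : 0 < τ₀)
    (hp0 : p 0 = 0)
    (hconc : ConcaveOn ℝ (Set.Icc 0 τ₀) p)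
    (s₁ s₂ : ℝ) (h1 : 0 < s₁) (h12 : s₁ ≤ s₂) (h2 : s₂ ≤ τ₀) :
    (p s₂ + p (τ₀ - s₂) - p τ₀) / s₂ ≤ (p s₁ + p (τ₀ - s₁) - p τ₀) / s₁ :=
  stmt_5_general p τ₀ hp0 hconc s₁ s₂ h1 h12 h2
end

section
/- Let p : ℝ → ℝ satisfy p(0) = 0, p non-decreasing on [0,∞), and p concave on [0,τ]. Let 0 < τ₀ < t̃ ≤ τ and set C₁ := (p(τ₀/3) + p(2τ₀/3) − p(τ₀)) / (τ₀/3). Then for every s ∈ (0, τ₀/3], one has p(s) + p(t̃ − s) − p(t̃) ≥ C₁·s. -/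
/-!
The function `g s := p s + p (t̃ - s)` is concave on `[0, t̃]`, so its secant slope from `0`,
which by `p 0 = 0` is `(p s + p (t̃ - s) - p t̃) / s`, decreases in `s`: for `s ≤ τ₀/3` it is at
least its value at `τ₀/3`. Concavity of `p` also makes increments over intervals of equal length
decrease, so `p t̃ - p (t̃ - τ₀/3) ≤ p τ₀ - p (2τ₀/3)` because `2τ₀/3 ≤ t̃ - τ₀/3`; hence that
value is at least `C₁`.
-/

open Set

namespace ConcaveOn

variable {S : Set ℝ} {f : ℝ → ℝ}

lemma sub_le_sub_of_le (hf : ConcaveOn ℝ S f) {x y h : ℝ} (hx : x ∈ S) (hyh : y + h ∈ S)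
    (hxy : x ≤ y) (hh : 0 ≤ h) : f (y + h) - f y ≤ f (x + h) - f x := by
  rcases hh.eq_or_lt with rfl | hh
  · simp
  have hS := hf.1.ordConnected
  have hxh : x + h ∈ S := hS.out hx hyh ⟨by linarith, by linarith⟩
  have hy : y ∈ S := hS.out hx hyh ⟨hxy, by linarith⟩
  have h_left : slope f x (y + h) ≤ slope f x (x + h) :=
    hf.slope_anti hx ⟨hxh, by simpa using hh.ne'⟩ ⟨hyh, (by linarith : x < y + h).ne'⟩ (by linarith)
  have h_right : slope f (y + h) y ≤ slope f (y + h) x :=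
    hf.slope_anti hyh ⟨hx, (by linarith : x < y + h).ne⟩ ⟨hy, by simpa using hh.ne'⟩ hxy
  rw [slope_comm f (y + h) x, slope_comm, slope_def_field, slope_def_field] at h_right
  rw [slope_def_field, slope_def_field] at h_left
  have := h_right.trans h_left
  rwa [show y + h - y = h by ring, show x + h - x = h by ring,
    div_le_div_iff_of_pos_right hh] at this

lemma add_comp_const_sub {t : ℝ} (hf : ConcaveOn ℝ (Icc 0 t) f) :
    ConcaveOn ℝ (Icc 0 t) (fun x => f x + f (t - x)) := by
  refine hf.add ⟨convex_Icc 0 t, fun x hx y hy a b ha hb hab => ?_⟩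
  have hx' : t - x ∈ Icc 0 t := ⟨by linarith [hx.2], by linarith [hx.1]⟩
  have hy' : t - y ∈ Icc 0 t := ⟨by linarith [hy.2], by linarith [hy.1]⟩
  convert hf.2 hx' hy' ha hb hab using 2
  simp only [smul_eq_mul]
  linear_combination (-t) * hab

end ConcaveOn

theorem stmt_6_general (p : ℝ → ℝ) (τ τ₀ ttil : ℝ)
    (hp0 : p 0 = 0)
    (hconc : ConcaveOn ℝ (Set.Icc 0 τ) p)
    (h0 : 0 < τ₀) (h1 : τ₀ < ttil) (h2 : ttil ≤ τ)
    (s : ℝ) (hs0 : 0 < s) (hs : s ≤ τ₀ / 3) :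
    ((p (τ₀ / 3) + p (2 * τ₀ / 3) - p τ₀) / (τ₀ / 3)) * s ≤
      p s + p (ttil - s) - p ttil := by
  have ha : 0 < τ₀ / 3 := by positivity
  have h_incr : p ttil - p (ttil - τ₀ / 3) ≤ p τ₀ - p (2 * τ₀ / 3) := by
    have := hconc.sub_le_sub_of_le (x := 2 * τ₀ / 3) (y := ttil - τ₀ / 3) (h := τ₀ / 3)
      ⟨by positivity, by linarith⟩ ⟨by linarith, by linarith⟩ (by linarith) ha.le
    rwa [sub_add_cancel, show 2 * τ₀ / 3 + τ₀ / 3 = τ₀ by ring] at this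
  have h_sym := (hconc.subset (Icc_subset_Icc le_rfl h2) (convex_Icc 0 ttil)).add_comp_const_sub
  have h_slope := h_sym.slope_anti ⟨le_rfl, by linarith⟩ ⟨⟨hs0.le, by linarith⟩, hs0.ne'⟩
    ⟨⟨ha.le, by linarith⟩, ha.ne'⟩ hs
  simp only [slope_def_field, hp0, sub_zero, zero_add] at h_slope
  calc (p (τ₀ / 3) + p (2 * τ₀ / 3) - p τ₀) / (τ₀ / 3) * s
      ≤ (p (τ₀ / 3) + p (ttil - τ₀ / 3) - p ttil) / (τ₀ / 3) * s := by
        gcongr ?_ / _ * _; linarith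
    _ ≤ (p s + p (ttil - s) - p ttil) / s * s := by gcongr
    _ = p s + p (ttil - s) - p ttil := div_mul_cancel₀ _ hs0.ne'

/-- Property (iv) in the proof of Lemma 2: with `0 < τ₀ < t̃ ≤ τ` and
`C₁ := (p (τ₀/3) + p (2τ₀/3) − p τ₀)/(τ₀/3)`, for every `s ∈ (0, τ₀/3]`,
`p s + p (t̃ − s) − p t̃ ≥ C₁ · s`. -/
theorem stmt_6 (p : ℝ → ℝ) (τ τ₀ ttil : ℝ)
    (hp0 : p 0 = 0)
    (hmono : MonotoneOn p (Set.Ici 0))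
    (hconc : ConcaveOn ℝ (Set.Icc 0 τ) p)
    (h0 : 0 < τ₀) (h1 : τ₀ < ttil) (h2 : ttil ≤ τ)
    (s : ℝ) (hs0 : 0 < s) (hs : s ≤ τ₀ / 3) :
    ((p (τ₀ / 3) + p (2 * τ₀ / 3) - p τ₀) / (τ₀ / 3)) * s ≤
      p s + p (ttil - s) - p ttil :=
  stmt_6_general p τ τ₀ ttil hp0 hconc h0 h1 h2 s hs0 hs
end

section
/- Let q > 1, let p : ℝ → ℝ satisfy p(0) = 0, p non-decreasing on [0,∞), p concave but not linear on [0,τ₀], p concave on [0,τ], and p twice continuously differentiable on [τ₀, τ], where 0 < τ₀ < τ. Fix τ̂ ∈ (τ₀, τ) and define g_{θ,μ}(t) := p(|t|) + θ·|t|^q + μ·|t − τ̂|^q. Then there exist θ̲ > 0 and μ̲ > 0 such that for all θ ≥ θ̲ and μ ≥ μ̲·θ: g_{θ,μ} has a unique global minimizer t*(θ,μ) over ℝ, this minimizer satisfies t*(θ,μ) ∈ (τ₀, τ), and, writing h(θ,μ) := g_{θ,μ}(t*(θ,μ)) for the minimum value, for every δ ∈ (0, min{t*(θ,μ) − τ₀,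 τ − t*(θ,μ), 1}) and every t ∈ ℝ, g_{θ,μ}(t) < h(θ,μ) + δ² implies |t − t*(θ,μ)| < δ. -/
/-!
On a small interval `J` around `τ̂` inside `(τ₀, τ)` one has
`g_{θ,μ}(t) = p t + θ t^q + μ |t - τ̂|^q`. There `p'' ≥ -K` by compactness, while
`(θ t^q)'' ≥ θ c` with `c > 0`, so for large `θ` the function `g_{θ,μ}` is `4`-strongly convex
on `J`. Taking `μ ≥ μ̲ θ` makes the last term alone push `g_{θ,μ}` above `g_{θ,μ}(τ̂) + 1` off `J`.
Hence the minimizer of `g_{θ,μ}` on `J` is global, and strong convexity gives the quadratic growth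
`g_{θ,μ}(t) ≥ h + (t - t*)²` for every near-minimizer `t`, which yields both the uniqueness of
`t*` and the `δ`-localization.
-/

/-- The function `g_{θ,μ}(t) = p |t| + θ·|t|^q + μ·|t − τ̂|^q` from the paper. -/
noncomputable def gfun (p : ℝ → ℝ) (θ μ q tauhat : ℝ) (t : ℝ) : ℝ :=
  p |t| + θ * |t| ^ q + μ * |t - tauhat| ^ q

open Set Metric

section StrongConvexity

variable {E : Type*} [NormedAddCommGroup E] [NormedSpace ℝ E] {s : Set E} {f g : E → ℝ} {m n : ℝ}

lemma StrongConvexOn.congr (hf : StrongConvexOn s m f) (hfg : EqOn f g s) :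
    StrongConvexOn s m g :=
  ⟨hf.1, fun x hx y hy a b ha hb hab => by
    rw [← hfg hx, ← hfg hy, ← hfg (hf.1 hx hy ha hb hab)]
    exact hf.2 hx hy ha hb hab⟩

lemma StrongConvexOn.add (hf : StrongConvexOn s m f) (hg : StrongConvexOn s n g) :
    StrongConvexOn s (m + n) (f + g) :=
  (UniformConvexOn.add hf hg).mono fun r => by simp only [Pi.add_apply]; linarith

lemma StrongConvexOn.const_mul {c : ℝ} (hc : 0 ≤ c) (hf : StrongConvexOn s m f) :
    StrongConvexOn s (c * m) (fun x => c * f x) :=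
  ⟨hf.1, fun x hx y hy a b ha hb hab => by
    have hc_mul := mul_le_mul_of_nonneg_left (hf.2 hx hy ha hb hab) hc
    simp only [smul_eq_mul] at hc_mul ⊢
    linarith⟩

/-- Comparing `f x` with `f` at the midpoint of `x` and `y` only gives `m / 4`, not the sharp
`m / 2`. -/
lemma StrongConvexOn.add_sq_norm_sub_le_of_isMinOn {x y : E} (hf : StrongConvexOn s m f)
    (hx : x ∈ s) (hmin : IsMinOn f s x) (hy : y ∈ s) :
    f x + m / 4 * ‖y - x‖ ^ 2 ≤ f y := by
  have half : (0 : ℝ) ≤ 1 / 2 := by norm_num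
  have hmid := hf.2 hy hx half half (by norm_num)
  have hle := isMinOn_iff.1 hmin _ (hf.1 hy hx half half (by norm_num))
  simp only [smul_eq_mul] at hmid hle
  linarith

end StrongConvexity

lemma strongConvexOn_of_hasDerivWithinAt2_ge {D : Set ℝ} (hD : Convex ℝ D) {f f' f'' : ℝ → ℝ}
    {m : ℝ} (hf : ContinuousOn f D)
    (hf' : ∀ x ∈ interior D, HasDerivWithinAt f (f' x) (interior D) x)
    (hf'' : ∀ x ∈ interior D, HasDerivWithinAt f' (f'' x) (interior D) x)
    (hm : ∀ x ∈ interior D, m ≤ f'' x) : StrongConvexOn D m f := by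
  rw [strongConvexOn_iff_convex]
  simp only [Real.norm_eq_abs, sq_abs]
  refine convexOn_of_hasDerivWithinAt2_nonneg hD (f' := fun x => f' x - m * x)
    (f'' := fun x => f'' x - m) (by fun_prop) (fun x hx => ?_) (fun x hx => ?_)
    (fun x hx => sub_nonneg.2 (hm x hx))
  · exact ((hf' x hx).sub (((hasDerivAt_pow 2 x).const_mul (m / 2)).hasDerivWithinAt)).congr_deriv
      (by ring)
  · exact ((hf'' x hx).sub (((hasDerivAt_id' x).const_mul m).hasDerivWithinAt)).congr_deriv
      (by ring)

lemma ContDiffOn.exists_strongConvexOn_Icc {U : Set ℝ} {f : ℝ → ℝ} {a b : ℝ} (hU : IsOpen U)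
    (hf : ContDiffOn ℝ 2 f U) (hab : Icc a b ⊆ U) : ∃ K, StrongConvexOn (Icc a b) (-K) f := by
  have hf' : ContDiffOn ℝ 1 (deriv f) U := hf.deriv_of_isOpen hU (by norm_num)
  obtain ⟨K, hK⟩ := isCompact_Icc.exists_bound_of_continuousOn
    ((hf'.continuousOn_deriv_of_isOpen hU le_rfl).mono hab)
  have hint : interior (Icc a b) ⊆ U := interior_subset.trans hab
  refine ⟨K, strongConvexOn_of_hasDerivWithinAt2_ge (convex_Icc a b) (f' := deriv f)
    (f'' := deriv (deriv f)) (hf.continuousOn.mono hab) (fun x hx => ?_) (fun x hx => ?_)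
    (fun x hx => ?_)⟩
  · exact (((hf.differentiableOn (by norm_num)) x (hint hx)).differentiableAt
      (hU.mem_nhds (hint hx))).hasDerivAt.hasDerivWithinAt
  · exact (((hf'.differentiableOn one_ne_zero) x (hint hx)).differentiableAt
      (hU.mem_nhds (hint hx))).hasDerivAt.hasDerivWithinAt
  · exact neg_le_of_abs_le (hK x (interior_subset hx))

lemma min_rpow_le_rpow {a b x : ℝ} (ha : 0 < a) (hx : x ∈ Icc a b) (e : ℝ) :
    min (a ^ e) (b ^ e) ≤ x ^ e := by
  rcases le_total 0 e with he | he
  · exact (min_le_left _ _).trans (Real.rpow_le_rpow ha.le hx.1 he)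
  · exact (min_le_right _ _).trans (Real.rpow_le_rpow_of_nonpos (ha.trans_le hx.1) hx.2 he)

lemma strongConvexOn_rpow_Icc {a b q : ℝ} (ha : 0 < a) (hq : 1 ≤ q) :
    StrongConvexOn (Icc a b) (q * (q - 1) * min (a ^ (q - 2)) (b ^ (q - 2))) (fun x => x ^ q) := by
  have hpos : ∀ x ∈ interior (Icc a b), 0 < x := fun x hx =>
    ha.trans_le (interior_subset hx).1
  refine strongConvexOn_of_hasDerivWithinAt2_ge (convex_Icc a b)
    (f' := fun x => q * x ^ (q - 1)) (f'' := fun x => q * ((q - 1) * x ^ (q - 2)))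
    (fun x hx =>
      (Real.continuousAt_rpow_const x q (Or.inl (ha.trans_le hx.1).ne')).continuousWithinAt)
    (fun x hx => (Real.hasDerivAt_rpow_const (Or.inl (hpos x hx).ne')).hasDerivWithinAt)
    (fun x hx => ?_) (fun x hx => ?_)
  · have hderiv := (Real.hasDerivAt_rpow_const (p := q - 1) (Or.inl (hpos x hx).ne')).const_mul q
    rw [sub_sub, one_add_one_eq_two] at hderiv
    exact hderiv.hasDerivWithinAt
  · rw [← mul_assoc]
    exact mul_le_mul_of_nonneg_left (min_rpow_le_rpow ha (interior_subset hx) _)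
      (mul_nonneg (by linarith) (by linarith))

lemma ConvexOn.rpow {E : Type*} [AddCommGroup E] [Module ℝ E] {s : Set E} {f : E → ℝ} {q : ℝ}
    (hf : ConvexOn ℝ s f) (hf₀ : ∀ x ∈ s, 0 ≤ f x) (hq : 1 ≤ q) :
    ConvexOn ℝ s (fun x => f x ^ q) :=
  ⟨hf.1, fun x hx y hy a b ha hb hab =>
    (Real.rpow_le_rpow (hf₀ _ (hf.1 hx hy ha hb hab)) (hf.2 hx hy ha hb hab) (by linarith)).trans
      ((convexOn_rpow hq).2 (hf₀ x hx) (hf₀ y hy) ha hb hab)⟩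

lemma exists_isMinOn_of_strongConvexOn_closedBall {E : Type*} [NormedAddCommGroup E]
    [NormedSpace ℝ E] [ProperSpace E] {f : E → ℝ} {c : E} {r : ℝ}
    (hcont : ContinuousOn f (closedBall c r)) (hconv : StrongConvexOn (closedBall c r) 4 f)
    (hfar : ∀ y, r ≤ dist y c → f c + 1 ≤ f y) :
    ∃ x ∈ closedBall c r, IsMinOn f univ x ∧ ∀ y, f y < f x + 1 → f x + ‖y - x‖ ^ 2 ≤ f y := by
  have hc : c ∈ closedBall c r := by
    rw [mem_closedBall, dist_self]
    by_contra h
    linarith [hfar c (by rw [dist_self]; linarith)]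
  obtain ⟨x, hx, hmin⟩ := (isCompact_closedBall c r).exists_isMinOn ⟨c, hc⟩ hcont
  have hxc := isMinOn_iff.1 hmin c hc
  have hnear : ∀ y, f y < f x + 1 → y ∈ closedBall c r := fun y hy => by
    by_contra h
    linarith [hfar y (not_le.1 h).le]
  refine ⟨x, hx, isMinOn_univ_iff.2 fun y => ?_, fun y hy => ?_⟩
  · by_cases hy : f y < f x + 1
    · exact hmin (hnear y hy)
    · linarith [not_lt.1 hy]
  · simpa using hconv.add_sq_norm_sub_le_of_isMinOn hx hmin (hnear y hy)

lemma gfun_add_le_of_le_abs_sub {p : ℝ → ℝ} {θ μ q tauhat r ε t : ℝ}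
    (hp : ∀ x, 0 ≤ x → 0 ≤ p x) (hθ : 0 ≤ θ) (hμ : 0 ≤ μ) (hq : 0 < q) (hr : 0 ≤ r)
    (hμr : p |tauhat| + θ * |tauhat| ^ q + ε ≤ μ * r ^ q) (ht : r ≤ |t - tauhat|) :
    gfun p θ μ q tauhat tauhat + ε ≤ gfun p θ μ q tauhat t := by
  have hμt : μ * r ^ q ≤ μ * |t - tauhat| ^ q :=
    mul_le_mul_of_nonneg_left (Real.rpow_le_rpow hr ht hq.le) hμ
  have hpt := hp |t| (abs_nonneg t)
  have hθt : 0 ≤ θ * |t| ^ q := by positivity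
  simp only [gfun, sub_self, abs_zero, Real.zero_rpow hq.ne', mul_zero]
  linarith

lemma continuousOn_gfun {p : ℝ → ℝ} {θ μ q tauhat a b : ℝ} (hp : ContinuousOn p (Icc a b))
    (ha : 0 ≤ a) (hq : 0 < q) : ContinuousOn (gfun p θ μ q tauhat) (Icc a b) := by
  have hpabs : ContinuousOn (fun t => p |t|) (Icc a b) :=
    hp.comp continuous_abs.continuousOn fun x hx => by
      rwa [abs_of_nonneg (ha.trans hx.1)]
  unfold gfun
  exact (hpabs.add (continuousOn_const.mul (continuous_abs.continuousOn.rpow_const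
    fun _ _ => Or.inr hq.le))).add (continuousOn_const.mul
    ((continuous_sub_right tauhat).abs.continuousOn.rpow_const fun _ _ => Or.inr hq.le))

lemma strongConvexOn_gfun {p : ℝ → ℝ} {θ μ q tauhat a b K : ℝ} (ha : 0 < a) (hq : 1 ≤ q)
    (hθ : 0 ≤ θ) (hμ : 0 ≤ μ) (hp : StrongConvexOn (Icc a b) (-K) p) :
    StrongConvexOn (Icc a b) (-K + θ * (q * (q - 1) * min (a ^ (q - 2)) (b ^ (q - 2))))
      (gfun p θ μ q tauhat) := by
  have hdist : StrongConvexOn (Icc a b) 0 (fun x => dist x tauhat ^ q) :=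
    strongConvexOn_zero.2 ((((convexOn_univ_dist tauhat).rpow (fun _ _ => dist_nonneg) hq).subset
      (subset_univ _) (convex_Icc a b)))
  have h := (hp.add ((strongConvexOn_rpow_Icc ha hq).const_mul hθ)).add (hdist.const_mul hμ)
  rw [mul_zero, add_zero] at h
  refine h.congr fun x hx => ?_
  simp only [Pi.add_apply, gfun, Real.dist_eq, abs_of_pos (ha.trans_le hx.1)]

lemma exists_isMinOn_gfun {p : ℝ → ℝ} {q tauhat r K θ μ : ℝ} (hq : 1 < q)
    (hp : ∀ x, 0 ≤ x → 0 ≤ p x) (hr : 0 < r) (ha : 0 < tauhat - r)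
    (hpc : ContinuousOn p (Icc (tauhat - r) (tauhat + r)))
    (hK : StrongConvexOn (Icc (tauhat - r) (tauhat + r)) (-K) p) (hθ : 0 ≤ θ) (hμ : 0 ≤ μ)
    (hθK : 4 ≤ -K + θ * (q * (q - 1) * min ((tauhat - r) ^ (q - 2)) ((tauhat + r) ^ (q - 2))))
    (hμr : p |tauhat| + θ * |tauhat| ^ q + 1 ≤ μ * r ^ q) :
    ∃ x ∈ closedBall tauhat r, IsMinOn (gfun p θ μ q tauhat) univ x ∧
      ∀ y, gfun p θ μ q tauhat y < gfun p θ μ q tauhat x + 1 →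
        gfun p θ μ q tauhat x + ‖y - x‖ ^ 2 ≤ gfun p θ μ q tauhat y := by
  have hsc : StrongConvexOn (closedBall tauhat r) 4 (gfun p θ μ q tauhat) := by
    rw [Real.closedBall_eq_Icc]
    exact (strongConvexOn_gfun ha hq.le hθ hμ hK).mono hθK
  have hcont : ContinuousOn (gfun p θ μ q tauhat) (closedBall tauhat r) := by
    rw [Real.closedBall_eq_Icc]
    exact continuousOn_gfun hpc ha.le (by linarith)
  exact exists_isMinOn_of_strongConvexOn_closedBall hcont hsc fun t ht =>
    gfun_add_le_of_le_abs_sub hp hθ hμ (by linarith) hr.le hμr (by rwa [← Real.dist_eq])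

theorem stmt_8_general (q : ℝ) (hq : 1 < q) (p : ℝ → ℝ) (τ₀ τ tauhat : ℝ)
    (h0 : 0 < τ₀) (hhat : tauhat ∈ Set.Ioo τ₀ τ)
    (hp0 : p 0 = 0)
    (hmono : MonotoneOn p (Set.Ici 0))
    (hC2 : ContDiffOn ℝ 2 p (Set.Icc τ₀ τ)) :
    ∃ θlb > (0 : ℝ), ∃ μlb > (0 : ℝ), ∀ θ, θlb ≤ θ → ∀ μ, μlb * θ ≤ μ →
      ∃ tstar ∈ Set.Ioo τ₀ τ,
        (∀ t : ℝ, gfun p θ μ q tauhat tstar ≤ gfun p θ μ q tauhat t) ∧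
        (∀ t' : ℝ, (∀ t : ℝ, gfun p θ μ q tauhat t' ≤ gfun p θ μ q tauhat t) →
          t' = tstar) ∧
        (∀ δ : ℝ, 0 < δ → δ < min (tstar - τ₀) (min (τ - tstar) 1) →
          ∀ t : ℝ, gfun p θ μ q tauhat t < gfun p θ μ q tauhat tstar + δ ^ 2 →
            |t - tstar| < δ) := by
  obtain ⟨hlo, hhi⟩ := hhat
  obtain ⟨r, hr, hrmin⟩ := exists_between (lt_min (sub_pos.2 hlo) (sub_pos.2 hhi))
  obtain ⟨hrlo, hrhi⟩ := lt_min_iff.1 hrmin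
  have hJ : Icc (tauhat - r) (tauhat + r) ⊆ Ioo τ₀ τ :=
    Icc_subset_Ioo (by linarith) (by linarith)
  have ha : 0 < tauhat - r := by linarith
  obtain ⟨K, hK⟩ := (hC2.mono Ioo_subset_Icc_self).exists_strongConvexOn_Icc isOpen_Ioo hJ
  set c := q * (q - 1) * min ((tauhat - r) ^ (q - 2)) ((tauhat + r) ^ (q - 2))
  have hc : 0 < c := mul_pos (mul_pos (by linarith) (by linarith))
    (lt_min (Real.rpow_pos_of_pos ha _) (Real.rpow_pos_of_pos (by linarith) _))
  have hp : ∀ x, 0 ≤ x → 0 ≤ p x := fun x hx => hp0 ▸ hmono self_mem_Ici hx hx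
  set A := p |tauhat| + |tauhat| ^ q + 1
  have hA : 0 < A := by
    linarith [hp |tauhat| (abs_nonneg _), Real.rpow_nonneg (abs_nonneg tauhat) q]
  have hrq : 0 < r ^ q := Real.rpow_pos_of_pos hr q
  -- `θ` must beat the lack of convexity `K` of `p` near `tauhat`; `μ` makes leaving the ball
  -- around `tauhat` cost more than `g(tauhat) + 1`.
  refine ⟨max 1 ((K + 4) / c), lt_max_of_lt_left one_pos, A / r ^ q, div_pos hA hrq,
    fun θ hθ μ hμ => ?_⟩
  have hθ1 : 1 ≤ θ := (le_max_left _ _).trans hθ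
  have hθK : 4 ≤ -K + θ * c := by linarith [(div_le_iff₀ hc).1 ((le_max_right _ _).trans hθ)]
  rw [div_mul_eq_mul_div, div_le_iff₀ hrq] at hμ
  have hμr : p |tauhat| + θ * |tauhat| ^ q + 1 ≤ μ * r ^ q := by
    nlinarith [hp |tauhat| (abs_nonneg _)]
  obtain ⟨x, hx, hmin, hgrowth⟩ := exists_isMinOn_gfun hq hp hr ha
    (hC2.continuousOn.mono (hJ.trans Ioo_subset_Icc_self)) hK (by linarith) (by nlinarith) hθK hμr
  refine ⟨x, hJ (Real.closedBall_eq_Icc ▸ hx), fun t => hmin (mem_univ t), fun t' ht' => ?_,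
    fun δ hδ hδlt t ht => ?_⟩
  · have hsq : ‖t' - x‖ ^ 2 ≤ 0 := by linarith [hgrowth t' (by linarith [ht' x]), ht' x]
    simpa [sub_eq_zero] using hsq
  · have hδ1 : δ < 1 := hδlt.trans_le ((min_le_right _ _).trans (min_le_right _ _))
    have hsq := hgrowth t (by nlinarith)
    rw [Real.norm_eq_abs, sq_abs] at hsq
    exact abs_lt_of_sq_lt_sq (by linarith) hδ.le

/-- Second and third assertions of Lemma 3 of the paper (`q > 1`): there exist
`θ̲ > 0`, `μ̲ > 0` such that for `θ ≥ θ̲`, `μ ≥ μ̲·θ`, the function `g_{θ,μ}` has a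
unique global minimizer `t* ∈ (τ₀, τ)`, and near-minimizers are `δ`-close to `t*`. -/
theorem stmt_8 (q : ℝ) (hq : 1 < q) (p : ℝ → ℝ) (τ₀ τ tauhat : ℝ)
    (h0 : 0 < τ₀) (hτ : τ₀ < τ) (hhat : tauhat ∈ Set.Ioo τ₀ τ)
    (hp0 : p 0 = 0)
    (hmono : MonotoneOn p (Set.Ici 0))
    (hconc : ConcaveOn ℝ (Set.Icc 0 τ) p)
    (hnotlin : ¬ ∃ c : ℝ, ∀ t ∈ Set.Icc (0 : ℝ) τ₀, p t = c * t)
    (hC2 : ContDiffOn ℝ 2 p (Set.Icc τ₀ τ)) :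
    ∃ θlb > (0 : ℝ), ∃ μlb > (0 : ℝ), ∀ θ, θlb ≤ θ → ∀ μ, μlb * θ ≤ μ →
      ∃ tstar ∈ Set.Ioo τ₀ τ,
        (∀ t : ℝ, gfun p θ μ q tauhat tstar ≤ gfun p θ μ q tauhat t) ∧
        (∀ t' : ℝ, (∀ t : ℝ, gfun p θ μ q tauhat t' ≤ gfun p θ μ q tauhat t) →
          t' = tstar) ∧
        (∀ δ : ℝ, 0 < δ → δ < min (tstar - τ₀) (min (τ - tstar) 1) →
          ∀ t : ℝ, gfun p θ μ q tauhat t < gfun p θ μ q tauhat tstar + δ ^ 2 →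
            |t - tstar| < δ) :=
  stmt_8_general q hq p τ₀ τ tauhat h0 hhat hp0 hmono hC2
end

section
/- Let q ≥ 1, 0 < τ₀ < τ̂, let p : ℝ → ℝ satisfy p(0) = 0 and p non-decreasing on [0,∞), and let θ̲ > 0. Set μ̲ := (p(τ̂) + θ̲·τ̂^q + 1) / (θ̲·(τ̂ − τ₀)^q). Then for all θ ≥ θ̲ and all μ ≥ μ̲·θ, and every real t ≤ τ₀: g_{θ,μ}(t) ≥ g_{θ,μ}(τ̂) + 1, where g_{θ,μ}(t) := p(|t|) + θ·|t|^q + μ·|t − τ̂|^q. -/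
lemma MonotoneOn.nonneg_of_map_zero {p : ℝ → ℝ} (hmono : MonotoneOn p (Set.Ici 0)) (hp0 : p 0 = 0)
    {x : ℝ} (hx : 0 ≤ x) : 0 ≤ p x :=
  hp0 ▸ hmono Set.self_mem_Ici hx hx

lemma gfun_self (p : ℝ → ℝ) (θ μ : ℝ) {q : ℝ} (hq : q ≠ 0) (tauhat : ℝ) :
    gfun p θ μ q tauhat tauhat = p |tauhat| + θ * |tauhat| ^ q := by
  simp [gfun, Real.zero_rpow hq]

lemma mul_rpow_le_gfun {p : ℝ → ℝ} (hp : ∀ x, 0 ≤ x → 0 ≤ p x) {θ : ℝ} (hθ : 0 ≤ θ)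
    (μ q tauhat t : ℝ) : μ * |t - tauhat| ^ q ≤ gfun p θ μ q tauhat t := by
  have hpt := hp |t| (abs_nonneg t)
  have hθt : 0 ≤ θ * |t| ^ q := mul_nonneg hθ (Real.rpow_nonneg (abs_nonneg t) q)
  unfold gfun
  linarith

lemma add_mul_add_one_le_of_div_mul_le {a b c θlb θ μ : ℝ} (ha : 0 ≤ a) (hc : 0 < c)
    (hθlb : 0 < θlb) (hθ : θlb ≤ θ) (hμ : (a + θlb * b + 1) / (θlb * c) * θ ≤ μ) :
    a + θ * b + 1 ≤ μ * c := calc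
  a + θ * b + 1 ≤ (a + 1) * (θ / θlb) + θ * b := by
    have : 1 ≤ θ / θlb := (one_le_div hθlb).2 hθ
    nlinarith
  _ = (a + θlb * b + 1) / (θlb * c) * θ * c := by field_simp; ring
  _ ≤ μ * c := by gcongr

/-- Inequality (Eq:Lem8_1) from the proof of Lemma 3: with
`μ̲ := (p τ̂ + θ̲·τ̂^q + 1)/(θ̲·(τ̂ − τ₀)^q)`, for all `θ ≥ θ̲`, `μ ≥ μ̲·θ` and all
`t ≤ τ₀`, one has `g_{θ,μ}(t) ≥ g_{θ,μ}(τ̂) + 1`. -/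
theorem stmt_9 (q : ℝ) (hq : 1 ≤ q) (τ₀ tauhat : ℝ)
    (h0 : 0 < τ₀) (h1 : τ₀ < tauhat)
    (p : ℝ → ℝ) (hp0 : p 0 = 0)
    (hmono : MonotoneOn p (Set.Ici 0))
    (θlb : ℝ) (hθlb : 0 < θlb)
    (θ μ : ℝ) (hθ : θlb ≤ θ)
    (hμ : ((p tauhat + θlb * tauhat ^ q + 1) / (θlb * (tauhat - τ₀) ^ q)) * θ ≤ μ)
    (t : ℝ) (ht : t ≤ τ₀) :
    gfun p θ μ q tauhat tauhat + 1 ≤ gfun p θ μ q tauhat t := by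
  have hτ : 0 < tauhat := h0.trans h1
  have hθpos : 0 < θ := hθlb.trans_le hθ
  have hp : ∀ x, 0 ≤ x → 0 ≤ p x := fun _ => hmono.nonneg_of_map_zero hp0
  have hgap : 0 < (tauhat - τ₀) ^ q := Real.rpow_pos_of_pos (sub_pos.2 h1) q
  have key : p tauhat + θ * tauhat ^ q + 1 ≤ μ * (tauhat - τ₀) ^ q :=
    add_mul_add_one_le_of_div_mul_le (hp _ hτ.le) hgap hθlb hθ hμ
  have hμ0 : 0 ≤ μ := by
    have : 0 < θ * tauhat ^ q := by positivity
    exact (pos_of_mul_pos_left (by linarith [hp _ hτ.le]) hgap.le).le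
  calc gfun p θ μ q tauhat tauhat + 1 = p tauhat + θ * tauhat ^ q + 1 := by
        rw [gfun_self p θ μ (by linarith) tauhat, abs_of_pos hτ]
    _ ≤ μ * (tauhat - τ₀) ^ q := key
    _ ≤ μ * |t - tauhat| ^ q := by
        rw [abs_sub_comm, abs_of_pos (by linarith)]
        gcongr
    _ ≤ gfun p θ μ q tauhat t := mul_rpow_le_gfun hp hθpos.le μ q tauhat t
end

section
/- Let q ≥ 1, let p : ℝ → ℝ satisfy p(0) = 0, p non-decreasing on [0,∞), and p concave on [0,τ] for some τ > 0, and fix τ̂ ∈ (0, τ) and θ, μ ≥ 0. Define g_{θ,μ}(t) := p(|t|) + θ·|t|^q + μ·|t − τ̂|^q and let h := inf_{t ∈ ℝ} g_{θ,μ}(t). Then for every integer l ≥ 2 and all reals t_1, …, t_l: p(|t_1|) + ⋯ + p(|t_l|) + θ·|t_1 + ⋯ + t_l|^q + μ·|t_1 + ⋯ + t_l − τ̂|^q ≥ h. -/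
open Finset

theorem ConcaveOn.div_mul_le_of_map_zero {p : ℝ → ℝ} {τ c x : ℝ}
    (hconc : ConcaveOn ℝ (Set.Icc 0 τ) p) (hp0 : p 0 = 0) (hc : 0 < c) (hcτ : c ≤ τ)
    (hx : 0 ≤ x) (hxc : x ≤ c) : x / c * p c ≤ p x := by
  have hxc' : x / c ≤ 1 := (div_le_one hc).2 hxc
  have hconv := hconc.2 ⟨le_rfl, hc.le.trans hcτ⟩ ⟨hc.le, hcτ⟩ (sub_nonneg.2 hxc')
    (div_nonneg hx hc.le) (sub_add_cancel 1 (x / c))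
  simpa [hp0, div_mul_cancel₀ x hc.ne'] using hconv

theorem map_nonneg_of_monotoneOn_Ici {p : ℝ → ℝ} {x : ℝ} (hp0 : p 0 = 0)
    (hmono : MonotoneOn p (Set.Ici 0)) (hx : 0 ≤ x) : 0 ≤ p x :=
  hp0 ▸ hmono Set.self_mem_Ici hx hx

theorem map_le_sum_of_concaveOn {ι : Type*} {p : ℝ → ℝ} {τ c : ℝ} (s : Finset ι) {x : ι → ℝ}
    (hp0 : p 0 = 0) (hmono : MonotoneOn p (Set.Ici 0)) (hconc : ConcaveOn ℝ (Set.Icc 0 τ) p)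
    (hc0 : 0 ≤ c) (hcτ : c ≤ τ) (hx : ∀ i ∈ s, 0 ≤ x i) (hcx : c ≤ ∑ i ∈ s, x i) :
    p c ≤ ∑ i ∈ s, p (x i) := by
  have hpx : ∀ i ∈ s, 0 ≤ p (x i) := fun i hi => map_nonneg_of_monotoneOn_Ici hp0 hmono (hx i hi)
  rcases hc0.eq_or_lt with rfl | hc
  · rw [hp0]
    exact sum_nonneg hpx
  by_cases hbig : ∃ i ∈ s, c ≤ x i
  · obtain ⟨i, hi, hci⟩ := hbig
    exact (hmono hc0 (hx i hi) hci).trans (single_le_sum hpx hi)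
  push Not at hbig
  calc p c = 1 * p c := (one_mul _).symm
    _ ≤ (∑ i ∈ s, x i) / c * p c :=
      mul_le_mul_of_nonneg_right ((one_le_div hc).2 hcx)
        (map_nonneg_of_monotoneOn_Ici hp0 hmono hc0)
    _ = ∑ i ∈ s, x i / c * p c := by rw [sum_div, sum_mul]
    _ ≤ ∑ i ∈ s, p (x i) := sum_le_sum fun i hi =>
      hconc.div_mul_le_of_map_zero hp0 hc hcτ (hx i hi) (hbig i hi).le

theorem bddBelow_range_gfun {p : ℝ → ℝ} {θ μ : ℝ} (q tauhat : ℝ) (hp0 : p 0 = 0)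
    (hmono : MonotoneOn p (Set.Ici 0)) (hθ : 0 ≤ θ) (hμ : 0 ≤ μ) :
    BddBelow (Set.range (gfun p θ μ q tauhat)) := by
  refine ⟨0, Set.forall_mem_range.2 fun t => ?_⟩
  have := map_nonneg_of_monotoneOn_Ici hp0 hmono (abs_nonneg t)
  unfold gfun
  positivity

theorem stmt_13_general (q : ℝ) (hq : 1 ≤ q) (p : ℝ → ℝ) (τ tauhat : ℝ)
    (hhat : tauhat ∈ Set.Ioo 0 τ)
    (hp0 : p 0 = 0)
    (hmono : MonotoneOn p (Set.Ici 0))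
    (hconc : ConcaveOn ℝ (Set.Icc 0 τ) p)
    (θ μ : ℝ) (hθ : 0 ≤ θ) (hμ : 0 ≤ μ)
    (l : ℕ) (t : Fin l → ℝ) :
    (⨅ s : ℝ, gfun p θ μ q tauhat s) ≤
      ∑ i, p |t i| + θ * |∑ i, t i| ^ q + μ * |∑ i, t i - tauhat| ^ q := by
  obtain ⟨hhat0, hhatτ⟩ := hhat
  have hI : -tauhat ≤ tauhat := by linarith
  set s := ∑ i, t i
  set u : ℝ := (Set.projIcc (-tauhat) tauhat hI s : ℝ)
  have hu_tauhat : |u| ≤ tauhat := abs_le.2 (Set.projIcc (-tauhat) tauhat hI s).2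
  have hu_s : |u| ≤ |s| := by
    simpa [Set.projIcc_of_mem hI ⟨neg_nonpos.2 hhat0.le, hhat0.le⟩]
      using Set.abs_projIcc_sub_projIcc hI (c := s) (d := 0)
  have hu_sub : |u - tauhat| ≤ |s - tauhat| := by
    simpa [Set.projIcc_right] using Set.abs_projIcc_sub_projIcc hI (c := s) (d := tauhat)
  have hpu : p |u| ≤ ∑ i, p |t i| :=
    map_le_sum_of_concaveOn univ hp0 hmono hconc (abs_nonneg u) (hu_tauhat.trans hhatτ.le)
      (fun i _ => abs_nonneg (t i)) (hu_s.trans (abs_sum_le_sum_abs _ _))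
  have hq0 : 0 ≤ q := zero_le_one.trans hq
  calc (⨅ s : ℝ, gfun p θ μ q tauhat s) ≤ gfun p θ μ q tauhat u :=
        ciInf_le (bddBelow_range_gfun q tauhat hp0 hmono hθ hμ) u
    _ ≤ _ := by unfold gfun; gcongr

/-- First assertion of Lemma 5 of the paper: with `h := ⨅ t, g_{θ,μ}(t)`, for every
`l ≥ 2` and reals `t₁, …, t_l`,
`p |t₁| + ⋯ + p |t_l| + θ·|∑ t_j|^q + μ·|∑ t_j − τ̂|^q ≥ h`. -/
theorem stmt_13 (q : ℝ) (hq : 1 ≤ q) (p : ℝ → ℝ) (τ tauhat : ℝ)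
    (hτ : 0 < τ) (hhat : tauhat ∈ Set.Ioo 0 τ)
    (hp0 : p 0 = 0)
    (hmono : MonotoneOn p (Set.Ici 0))
    (hconc : ConcaveOn ℝ (Set.Icc 0 τ) p)
    (θ μ : ℝ) (hθ : 0 ≤ θ) (hμ : 0 ≤ μ)
    (l : ℕ) (hl : 2 ≤ l) (t : Fin l → ℝ) :
    (⨅ s : ℝ, gfun p θ μ q tauhat s) ≤
      ∑ i, p |t i| + θ * |∑ i, t i| ^ q + μ * |∑ i, t i - tauhat| ^ q :=
  stmt_13_general q hq p τ tauhat hhat hp0 hmono hconc θ μ hθ hμ l t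
end

section
/- Let q ≥ 1, 0 < τ₀ < τ̂ < τ, let p : ℝ → ℝ satisfy p(0) = 0, p non-decreasing on [0,∞), p concave on [0,τ], and p not linear on [0,τ₀]. Set C₁ := (p(τ₀/3) + p(2τ₀/3) − p(τ₀)) / (τ₀/3). Let θ, μ ≥ 0 and define g_{θ,μ}(t) := p(|t|) + θ·|t|^q + μ·|t − τ̂|^q. Assume g_{θ,μ} has a unique global minimizer t* ∈ (τ₀, τ) over ℝ with minimum value h := g_{θ,μ}(t*), and assume that for every δ ∈ (0, min{t* − τ₀, τ − t*, 1}) and every t ∈ ℝ, g_{θ,μ}(t) < h + δ² implies |t − t*| < δ. Let δ̄ := min{ τ₀/3, (t* − τ₀)/2, (τ − t*)/2, 1, C₁ }. Then for every δ ∈ (0, δ̄), every integer l ≥ 2, and all reals t_1, …, t_l: if p(|t_1|) + ⋯ + p(|t_l|) + θ·|t_1 + ⋯ + t_l|^q + μ·|t_1 + ⋯ + t_l − τ̂|^q < h + δ², then there exists an index i such that |t_i − t*| < 2δ and |t_j| ≤ δ for all j ≠ i. -/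
open Set

section Concave

variable {p : ℝ → ℝ} {τ : ℝ}

lemma ConcaveOn.add_le_add_sub {s : Set ℝ} {x y u : ℝ} (hp : ConcaveOn ℝ s p) (hx : x ∈ s)
    (hy : y ∈ s) (hu : u ∈ Icc x y) : p x + p y ≤ p u + p (x + y - u) := by
  obtain ⟨hxu, huy⟩ := hu
  rcases hxu.trans huy |>.eq_or_lt with rfl | hxy
  · obtain rfl : u = x := le_antisymm huy hxu
    simp
  have hyx : 0 < y - x := sub_pos.mpr hxy
  set w := (u - x) / (y - x)
  have hw₀ : 0 ≤ w := div_nonneg (sub_nonneg.mpr hxu) hyx.le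
  have hw₁ : 0 ≤ 1 - w := by
    rw [sub_nonneg, div_le_one hyx]; linarith
  have hpu := hp.2 hy hx hw₀ hw₁ (by ring)
  have hpv := hp.2 hy hx hw₁ hw₀ (by ring)
  have eu : w • y + (1 - w) • x = u := by simp only [smul_eq_mul, w]; field_simp; ring
  have ev : (1 - w) • y + w • x = x + y - u := by simp only [smul_eq_mul, w]; field_simp; ring
  rw [eu] at hpu
  rw [ev] at hpv
  simp only [smul_eq_mul] at hpu hpv
  linarith

lemma ConcaveOn.le_add (hp : ConcaveOn ℝ (Icc 0 τ) p) (hp0 : p 0 = 0) {x y : ℝ}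
    (hx : 0 ≤ x) (hy : 0 ≤ y) (hxy : x + y ≤ τ) : p (x + y) ≤ p x + p y := by
  have := hp.add_le_add_sub (left_mem_Icc.mpr (by linarith)) ⟨by linarith, hxy⟩
    (u := x) ⟨hx, by linarith⟩
  rwa [hp0, zero_add, zero_add, add_sub_cancel_left] at this

lemma ConcaveOn.le_sum_of_le_sum {ι : Type*} (hp : ConcaveOn ℝ (Icc 0 τ) p) (hp0 : p 0 = 0)
    (hmono : MonotoneOn p (Ici 0)) (s : Finset ι) {f : ι → ℝ} (hf : ∀ k ∈ s, 0 ≤ f k)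
    {u : ℝ} (hu₀ : 0 ≤ u) (hu : u ≤ ∑ k ∈ s, f k) (huτ : u ≤ τ) :
    p u ≤ ∑ k ∈ s, p (f k) := by
  induction s using Finset.cons_induction generalizing u with
  | empty =>
    obtain rfl : u = 0 := le_antisymm (by simpa using hu) hu₀
    simp [hp0]
  | cons a s has ih =>
    simp only [Finset.mem_cons, forall_eq_or_imp] at hf
    rw [Finset.sum_cons] at hu ⊢
    have hs₀ : 0 ≤ ∑ k ∈ s, f k := Finset.sum_nonneg hf.2
    set v := min u (f a)
    have hv : p v ≤ p (f a) := hmono (le_min hu₀ hf.1) hf.1 (min_le_right _ _)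
    have hrest : p (u - v) ≤ ∑ k ∈ s, p (f k) := by
      refine ih hf.2 (by simp [v]) ?_ (by linarith [le_min hu₀ hf.1])
      rcases min_cases u (f a) with ⟨h, -⟩ | ⟨h, -⟩ <;> simp only [v, h] <;> linarith
    have hsplit := hp.le_add hp0 (le_min hu₀ hf.1) (by simp [v] : 0 ≤ u - v)
      (by linarith : v + (u - v) ≤ τ)
    rw [add_sub_cancel] at hsplit
    linarith

lemma ConcaveOn.add_sub_le_sum_of_split {ι : Type*} [DecidableEq ι] (hp : ConcaveOn ℝ (Icc 0 τ) p)
    (hp0 : p 0 = 0) (hmono : MonotoneOn p (Ici 0)) {s T : Finset ι} (hT : T ⊆ s) {f : ι → ℝ}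
    (hf : ∀ k ∈ s, 0 ≤ f k) {δ S : ℝ} (hδ : 0 ≤ δ) (hδS : 2 * δ ≤ S) (hSτ : S ≤ τ)
    (hS : S ≤ ∑ k ∈ s, f k) (hT₁ : δ ≤ ∑ k ∈ T, f k) (hT₂ : δ ≤ ∑ k ∈ s \ T, f k) :
    p δ + p (S - δ) ≤ ∑ k ∈ s, p (f k) := by
  rw [← Finset.sum_sdiff hT] at hS ⊢
  set x := min (∑ k ∈ T, f k) (S - δ)
  have hδx : δ ≤ x := le_min hT₁ (by linarith)
  have hxS : x ≤ S - δ := min_le_right _ _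
  have hSx : S - x ≤ ∑ k ∈ s \ T, f k := by
    rcases min_cases (∑ k ∈ T, f k) (S - δ) with ⟨h, -⟩ | ⟨h, -⟩ <;> simp only [x, h] <;> linarith
  have hspread := hp.add_le_add_sub (u := x) ⟨hδ, by linarith⟩ ⟨by linarith, by linarith⟩
    ⟨hδx, hxS⟩
  rw [add_sub_cancel] at hspread
  have hTx := hp.le_sum_of_le_sum hp0 hmono T (fun k hk ↦ hf k (hT hk)) (by linarith)
    (min_le_left _ _) (by linarith)
  have hTSx := hp.le_sum_of_le_sum hp0 hmono (s \ T) (fun k hk ↦ hf k (Finset.sdiff_subset hk))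
    (by linarith) hSx (by linarith)
  linarith

lemma ConcaveOn.mul_le_add_sub (hp : ConcaveOn ℝ (Icc 0 τ) p) (hp0 : p 0 = 0) {τ₀ δ S : ℝ}
    (hτ₀ : 0 < τ₀) (hδ : 0 ≤ δ) (hδτ₀ : δ ≤ τ₀ / 3) (hτ₀S : τ₀ ≤ S) (hSτ : S ≤ τ) :
    δ * ((p (τ₀ / 3) + p (2 * τ₀ / 3) - p τ₀) / (τ₀ / 3)) ≤ p δ + p (S - δ) - p S := by
  have hshift := hp.add_le_add_sub (x := τ₀ - δ) (u := τ₀) ⟨by linarith, by linarith⟩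
    ⟨by linarith, hSτ⟩ ⟨by linarith, hτ₀S⟩
  rw [show τ₀ - δ + S - τ₀ = S - δ by ring] at hshift
  -- `w = 3δ/τ₀` writes `δ` and `τ₀ - δ` as convex combinations of `0, τ₀/3` and `2τ₀/3, τ₀`.
  set w := 3 * δ / τ₀
  have hw₀ : 0 ≤ w := by positivity
  have hw₁ : 0 ≤ 1 - w := by rw [sub_nonneg, div_le_one hτ₀]; linarith
  have hchord₁ := hp.2 (x := τ₀ / 3) (y := 0) ⟨by positivity, by linarith⟩
    ⟨le_rfl, by linarith⟩ hw₀ hw₁ (by ring)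
  have hchord₂ := hp.2 (x := 2 * τ₀ / 3) (y := τ₀) ⟨by positivity, by linarith⟩
    ⟨hτ₀.le, by linarith⟩ hw₀ hw₁ (by ring)
  simp only [smul_eq_mul] at hchord₁ hchord₂
  rw [show w * (τ₀ / 3) + (1 - w) * 0 = δ by simp only [w]; field_simp; ring, hp0] at hchord₁
  rw [show w * (2 * τ₀ / 3) + (1 - w) * τ₀ = τ₀ - δ by simp only [w]; field_simp; ring]
    at hchord₂
  have hC : δ * ((p (τ₀ / 3) + p (2 * τ₀ / 3) - p τ₀) / (τ₀ / 3))
      = w * (p (τ₀ / 3) + p (2 * τ₀ / 3) - p τ₀) := by simp only [w]; field_simp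
  linarith

end Concave

lemma Finset.exists_subset_sum_mem_Ico_s14 {ι : Type*} {s : Finset ι} {f : ι → ℝ} {δ : ℝ}
    (hδ : 0 < δ) (hf : ∀ k ∈ s, f k < δ) (hs : δ ≤ ∑ k ∈ s, f k) :
    ∃ T ⊆ s, ∑ k ∈ T, f k ∈ Set.Ico δ (2 * δ) := by
  induction s using Finset.cons_induction with
  | empty => simp only [Finset.sum_empty] at hs; linarith
  | cons a s has ih =>
    simp only [Finset.mem_cons, forall_eq_or_imp] at hf
    by_cases hrest : δ ≤ ∑ k ∈ s, f k
    · obtain ⟨T, hT, hTsum⟩ := ih hf.2 hrest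
      exact ⟨T, hT.trans (Finset.subset_cons has), hTsum⟩
    · refine ⟨Finset.cons a s has, subset_rfl, hs, ?_⟩
      rw [Finset.sum_cons]
      linarith

lemma Finset.exists_sum_erase_le_or_exists_split {ι : Type*} [DecidableEq ι] {s : Finset ι}
    {f : ι → ℝ} {δ : ℝ} (hδ : 0 < δ) (hs : 3 * δ ≤ ∑ k ∈ s, f k) :
    (∃ i ∈ s, ∑ k ∈ s.erase i, f k ≤ δ) ∨
      ∃ T ⊆ s, δ ≤ ∑ k ∈ T, f k ∧ δ ≤ ∑ k ∈ s \ T, f k := by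
  by_cases hbig : ∃ i ∈ s, δ ≤ f i
  · obtain ⟨i, hi, hfi⟩ := hbig
    refine (le_or_gt (∑ k ∈ s.erase i, f k) δ).imp (fun h ↦ ⟨i, hi, h⟩) fun h ↦ ?_
    refine ⟨{i}, Finset.singleton_subset_iff.mpr hi, by simpa using hfi, ?_⟩
    rw [Finset.sdiff_singleton_eq_erase]
    exact h.le
  · push Not at hbig
    obtain ⟨T, hT, hT₁, hT₂⟩ := exists_subset_sum_mem_Ico_s14 hδ hbig (by linarith)
    refine .inr ⟨T, hT, hT₁, ?_⟩
    rw [← Finset.sum_sdiff hT] at hs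
    linarith

lemma Finset.abs_sub_lt_two_mul_of_sum_erase_le {ι : Type*} [DecidableEq ι] {s : Finset ι}
    {t : ι → ℝ} {c δ : ℝ} {i : ι} (hi : i ∈ s) (hsum : |∑ k ∈ s, t k - c| < δ)
    (hrest : ∑ k ∈ s.erase i, |t k| ≤ δ) :
    |t i - c| < 2 * δ ∧ ∀ j ∈ s, j ≠ i → |t j| ≤ δ := by
  refine ⟨?_, fun j hj hji ↦ ?_⟩
  · rw [← Finset.add_sum_erase s t hi] at hsum
    obtain ⟨hsum₁, hsum₂⟩ := abs_lt.mp hsum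
    obtain ⟨hrest₁, hrest₂⟩ := abs_le.mp ((abs_sum_le_sum_abs t (s.erase i)).trans hrest)
    exact abs_lt.mpr ⟨by linarith, by linarith⟩
  · exact (Finset.single_le_sum (fun k _ ↦ abs_nonneg (t k)) (Finset.mem_erase.mpr ⟨hji, hj⟩)).trans
      hrest

lemma abs_sub_lt_of_gfun_lt {p : ℝ → ℝ} {θ μ q tauhat τ c δ h S P : ℝ} (hθ : 0 ≤ θ)
    (hμ : 0 ≤ μ) (hq : 0 ≤ q) (htauhat : |tauhat| ≤ τ) (hc : |c| + δ ≤ τ)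
    (hP : ∀ u, 0 ≤ u → u ≤ |S| → u ≤ τ → p u ≤ P)
    (hloc : ∀ u, gfun p θ μ q tauhat u < h + δ ^ 2 → |u - c| < δ)
    (hlt : P + θ * |S| ^ q + μ * |S - tauhat| ^ q < h + δ ^ 2) : |S - c| < δ := by
  have hτ : -τ ≤ τ := by linarith [abs_nonneg tauhat]
  set u : ℝ := (projIcc (-τ) τ hτ S : ℝ) with hu_def
  have hfix : ∀ x ∈ Icc (-τ) τ, |u - x| ≤ |S - x| := fun x hx ↦ by
    simpa [projIcc_of_mem hτ hx] using abs_projIcc_sub_projIcc hτ (c := S) (d := x)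
  have hu₀ : |u| ≤ |S| := by simpa using hfix 0 ⟨by linarith, by linarith⟩
  have hg : gfun p θ μ q tauhat u < h + δ ^ 2 := by
    have hpu := hP |u| (abs_nonneg u) hu₀ (abs_le.mpr (projIcc (-τ) τ hτ S).2)
    have hθu : θ * |u| ^ q ≤ θ * |S| ^ q := by gcongr
    have hμu : μ * |u - tauhat| ^ q ≤ μ * |S - tauhat| ^ q := by
      gcongr μ * ?_ ^ q
      exact hfix tauhat (abs_le.mp htauhat)
    unfold gfun
    linarith
  have hclose := hloc u hg
  obtain ⟨hu₁, hu₂⟩ := abs_lt.mp (show |u| < τ by linarith [abs_sub_abs_le_abs_sub u c])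
  rw [hu_def, coe_projIcc] at hu₁ hu₂ hclose
  have hSτ : S < τ := by simpa using (max_lt_iff.mp hu₂).2
  rw [min_eq_right hSτ.le] at hu₁ hclose
  rwa [max_eq_right (by simpa using hu₁ : -τ < S).le] at hclose

theorem stmt_14_general (q : ℝ) (hq : 1 ≤ q) (p : ℝ → ℝ) (τ₀ τ tauhat : ℝ)
    (h0 : 0 < τ₀) (h1 : τ₀ < tauhat) (h2 : tauhat < τ)
    (hp0 : p 0 = 0)
    (hmono : MonotoneOn p (Set.Ici 0))
    (hconc : ConcaveOn ℝ (Set.Icc 0 τ) p)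
    (θ μ : ℝ) (hθ : 0 ≤ θ) (hμ : 0 ≤ μ)
    (tstar : ℝ) (htstar : tstar ∈ Set.Ioo τ₀ τ)
    (hmin : ∀ t : ℝ, gfun p θ μ q tauhat tstar ≤ gfun p θ μ q tauhat t)
    (hloc : ∀ δ : ℝ, 0 < δ → δ < min (tstar - τ₀) (min (τ - tstar) 1) →
      ∀ t : ℝ, gfun p θ μ q tauhat t < gfun p θ μ q tauhat tstar + δ ^ 2 →
        |t - tstar| < δ)
    (δ : ℝ) (hδ0 : 0 < δ)
    (hδ : δ < min (τ₀ / 3) (min ((tstar - τ₀) / 2) (min ((τ - tstar) / 2)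
      (min 1 ((p (τ₀ / 3) + p (2 * τ₀ / 3) - p τ₀) / (τ₀ / 3))))))
    (l : ℕ) (t : Fin l → ℝ)
    (hlt : ∑ i, p |t i| + θ * |∑ i, t i| ^ q + μ * |∑ i, t i - tauhat| ^ q <
      gfun p θ μ q tauhat tstar + δ ^ 2) :
    ∃ i, |t i - tstar| < 2 * δ ∧ ∀ j, j ≠ i → |t j| ≤ δ := by
  obtain ⟨htτ₀, htτ⟩ := htstar
  simp only [lt_min_iff] at hδ
  obtain ⟨hδτ₀, hδt, hδτ, hδ1, hδC⟩ := hδ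
  have hmass : |∑ i, t i| ≤ ∑ i, |t i| := Finset.abs_sum_le_sum_abs t _
  have hS : |∑ i, t i - tstar| < δ :=
    abs_sub_lt_of_gfun_lt hθ hμ (by linarith) (abs_le.mpr ⟨by linarith, h2.le⟩)
      (by rw [abs_of_pos (by linarith)]; linarith)
      (fun u hu₀ hu huτ ↦ hconc.le_sum_of_le_sum hp0 hmono _ (fun i _ ↦ abs_nonneg (t i)) hu₀
        (hu.trans hmass) huτ)
      (hloc δ hδ0 (by simp only [lt_min_iff]; exact ⟨by linarith, by linarith, hδ1⟩)) hlt
  obtain ⟨hS₁, hS₂⟩ := abs_lt.mp hS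
  have hSpos : 0 < ∑ i, t i := by linarith
  have hpS : ∑ i, p |t i| < p (∑ i, t i) + δ ^ 2 := by
    have := hmin (∑ i, t i)
    unfold gfun at this hlt
    rw [abs_of_pos hSpos] at this hlt
    linarith
  have hSmass : ∑ i, t i ≤ ∑ i, |t i| := (le_abs_self _).trans hmass
  have h3δ : 3 * δ ≤ ∑ i, |t i| := by linarith
  rcases Finset.exists_sum_erase_le_or_exists_split hδ0 h3δ with ⟨i, hi, hrest⟩ | ⟨T, hT, hT₁, hT₂⟩
  · obtain ⟨hti, hrest⟩ := Finset.abs_sub_lt_two_mul_of_sum_erase_le hi hS hrest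
    exact ⟨i, hti, fun j hj ↦ hrest j (Finset.mem_univ j) hj⟩
  · have hsplit := hconc.add_sub_le_sum_of_split hp0 hmono hT (fun i _ ↦ abs_nonneg (t i))
      hδ0.le (by linarith) (by linarith) hSmass hT₁ hT₂
    have hdefect := hconc.mul_le_add_sub (S := ∑ i, t i) hp0 h0 hδ0.le hδτ₀.le (by linarith)
      (by linarith)
    have hδsq : δ ^ 2 < δ * ((p (τ₀ / 3) + p (2 * τ₀ / 3) - p τ₀) / (τ₀ / 3)) := by
      rw [sq]; exact mul_lt_mul_of_pos_left hδC hδ0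
    linarith

/-- Second ('only if') assertion of Lemma 5 of the paper: assuming `g_{θ,μ}` has a
unique global minimizer `t* ∈ (τ₀, τ)` with value `h = g_{θ,μ}(t*)` satisfying the
localization property, for `δ ∈ (0, δ̄)` with
`δ̄ = min {τ₀/3, (t*−τ₀)/2, (τ−t*)/2, 1, C₁}`, if
`∑ p |t_j| + θ·|∑ t_j|^q + μ·|∑ t_j − τ̂|^q < h + δ²`, then some `t_i` is `2δ`-close to
`t*` while all other `t_j` satisfy `|t_j| ≤ δ`. -/
theorem stmt_14 (q : ℝ) (hq : 1 ≤ q) (p : ℝ → ℝ) (τ₀ τ tauhat : ℝ)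
    (h0 : 0 < τ₀) (h1 : τ₀ < tauhat) (h2 : tauhat < τ)
    (hp0 : p 0 = 0)
    (hmono : MonotoneOn p (Set.Ici 0))
    (hconc : ConcaveOn ℝ (Set.Icc 0 τ) p)
    (hnotlin : ¬ ∃ c : ℝ, ∀ t ∈ Set.Icc (0 : ℝ) τ₀, p t = c * t)
    (θ μ : ℝ) (hθ : 0 ≤ θ) (hμ : 0 ≤ μ)
    (tstar : ℝ) (htstar : tstar ∈ Set.Ioo τ₀ τ)
    (hmin : ∀ t : ℝ, gfun p θ μ q tauhat tstar ≤ gfun p θ μ q tauhat t)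
    (huniq : ∀ t' : ℝ, (∀ t : ℝ, gfun p θ μ q tauhat t' ≤ gfun p θ μ q tauhat t) →
      t' = tstar)
    (hloc : ∀ δ : ℝ, 0 < δ → δ < min (tstar - τ₀) (min (τ - tstar) 1) →
      ∀ t : ℝ, gfun p θ μ q tauhat t < gfun p θ μ q tauhat tstar + δ ^ 2 →
        |t - tstar| < δ)
    (δ : ℝ) (hδ0 : 0 < δ)
    (hδ : δ < min (τ₀ / 3) (min ((tstar - τ₀) / 2) (min ((τ - tstar) / 2)
      (min 1 ((p (τ₀ / 3) + p (2 * τ₀ / 3) - p τ₀) / (τ₀ / 3))))))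
    (l : ℕ) (hl : 2 ≤ l) (t : Fin l → ℝ)
    (hlt : ∑ i, p |t i| + θ * |∑ i, t i| ^ q + μ * |∑ i, t i - tauhat| ^ q <
      gfun p θ μ q tauhat tstar + δ ^ 2) :
    ∃ i, |t i - tstar| < 2 * δ ∧ ∀ j, j ≠ i → |t j| ≤ δ :=
  stmt_14_general q hq p τ₀ τ tauhat h0 h1 h2 hp0 hmono hconc θ μ hθ hμ tstar htstar hmin hloc δ hδ0
    hδ l t hlt
end

section
/- Let q ≥ 1, λ > 0, θ, μ ≥ 0, and let p : ℝ → ℝ satisfy p(0) = 0, p non-decreasing on [0,∞), and p concave on [0,τ] for some τ > 0, with τ̂ ∈ (0,τ) fixed. Define g_{θ,μ}(t) := p(|t|) + θ·|t|^q + μ·|t − τ̂|^q and h := inf_{t∈ℝ} g_{θ,μ}(t). Let n, m be positive integers with m ≥ 2, let b_1, …, b_n be reals, and for x = (x_{ij}) ∈ ℝ^{n×m} define F(x) := Σ_{j=2}^m |Σ_{i=1}^n b_i x_{ij} − Σ_{i=1}^n b_i x_{i1}|^q + λθ·Σ_{i=1}^n |Σ_{j=1}^m x_{ij}|^q + λμ·Σ_{i=1}^n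 |Σ_{j=1}^m x_{ij} − τ̂|^q + λ·Σ_{i=1}^n Σ_{j=1}^m p(|x_{ij}|). Then F(x) ≥ n·λ·h for every x ∈ ℝ^{n×m}. -/
/-!
Concavity of `p` on `[0, τ]` together with `p 0 = 0` makes `p` subadditive there, and
monotonicity upgrades this to `p a ≤ ∑ j, p (c j)` whenever `0 ≤ a ≤ τ` and `a ≤ ∑ j, c j`.
For a row with sum `s`, the triangle inequality gives `|s| ≤ ∑ j, |x j|`, so the row's share
`θ |s|^q + μ |s - τ̂|^q + ∑ j, p |x j|` dominates `g s` when `|s| ≤ τ̂` and `g τ̂` otherwise.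
Summing over the rows and dropping the nonnegative data-fit term gives `F x ≥ n λ h`.
-/

/-- The objective function `F` of the regularized `L_q`-minimization instance
constructed in the reduction from 3-partition in the proof of Theorem 1 (columns are
indexed by `Fin m`, column `0` playing the role of the first subset). -/
noncomputable def Fobj (q lam θ μ tauhat : ℝ) (p : ℝ → ℝ) (n m : ℕ) [NeZero m]
    (b : Fin n → ℝ) (x : Fin n → Fin m → ℝ) : ℝ :=
  (∑ j ∈ Finset.univ.erase (0 : Fin m),
      |(∑ i, b i * x i j) - ∑ i, b i * x i 0| ^ q) +
    lam * θ * ∑ i, |∑ j, x i j| ^ q +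
    lam * μ * ∑ i, |(∑ j, x i j) - tauhat| ^ q +
    lam * ∑ i, ∑ j, p |x i j|

open Set Finset

section Penalty

variable {p : ℝ → ℝ} {τ : ℝ}

lemma ConcaveOn.mul_le_map_mul (hp : ConcaveOn ℝ (Icc 0 τ) p) (hp0 : 0 ≤ p 0)
    {t x : ℝ} (ht₀ : 0 ≤ t) (ht₁ : t ≤ 1) (hx : x ∈ Icc 0 τ) :
    t * p x ≤ p (t * x) := by
  have h := hp.2 hx ⟨le_rfl, hx.1.trans hx.2⟩ ht₀ (sub_nonneg.2 ht₁) (add_sub_cancel t 1)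
  simp only [smul_eq_mul, mul_zero, add_zero] at h
  nlinarith [mul_nonneg (sub_nonneg.2 ht₁) hp0]

lemma ConcaveOn.map_add_le (hp : ConcaveOn ℝ (Icc 0 τ) p) (hp0 : 0 ≤ p 0)
    {a b : ℝ} (ha : 0 ≤ a) (hb : 0 ≤ b) (hab : a + b ≤ τ) :
    p (a + b) ≤ p a + p b := by
  rcases (add_nonneg ha hb).eq_or_lt with hzero | hpos
  · obtain ⟨rfl, rfl⟩ : a = 0 ∧ b = 0 := ⟨by linarith, by linarith⟩
    simpa using hp0
  have hmem : a + b ∈ Icc 0 τ := ⟨hpos.le, hab⟩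
  have hle : ∀ c, 0 ≤ c → c ≤ a + b → c / (a + b) * p (a + b) ≤ p c := fun c hc hcab => by
    simpa [div_mul_cancel₀ c hpos.ne'] using
      hp.mul_le_map_mul hp0 (div_nonneg hc hpos.le) ((div_le_one hpos).2 hcab) hmem
  have hsplit : a / (a + b) * p (a + b) + b / (a + b) * p (a + b) = p (a + b) := by
    field_simp
  linarith [hle a ha (by linarith), hle b hb (by linarith)]

lemma ConcaveOn.map_le_sum_of_le_sum {ι : Type*} (hp : ConcaveOn ℝ (Icc 0 τ) p)
    (hmono : MonotoneOn p (Ici 0)) (hp0 : p 0 = 0) (s : Finset ι) {c : ι → ℝ}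
    (hc : ∀ j, 0 ≤ c j) {a : ℝ} (ha : a ∈ Icc 0 τ) (has : a ≤ ∑ j ∈ s, c j) :
    p a ≤ ∑ j ∈ s, p (c j) := by
  classical
  induction s using Finset.induction_on generalizing a with
  | empty =>
    obtain rfl : a = 0 := le_antisymm (by simpa using has) ha.1
    simp [hp0]
  | insert j s hj ih =>
    rw [Finset.sum_insert hj] at has ⊢
    -- split `a` into a part below `c j` and a remainder below `∑ i ∈ s, c i`
    set e := min (c j) a
    have he : 0 ≤ e := le_min (hc j) ha.1
    have hea : e ≤ a := min_le_right _ _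
    have hrest : p (a - e) ≤ ∑ i ∈ s, p (c i) :=
      ih ⟨sub_nonneg.2 hea, by linarith [ha.2]⟩ (by
        rcases min_cases (c j) a with ⟨h, _⟩ | ⟨h, _⟩ <;> simp only [e, h] <;>
          linarith [Finset.sum_nonneg fun i (_ : i ∈ s) => hc i])
    have hsplit : p a ≤ p e + p (a - e) := by
      simpa using hp.map_add_le hp0.ge he (sub_nonneg.2 hea) (by linarith [ha.2])
    linarith [hmono he (hc j) (min_le_left _ _)]

lemma iInf_penalty_le_of_sum {ι : Type*} [Fintype ι] {q θ μ tauhat : ℝ} (hq : 0 < q)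
    (hθ : 0 ≤ θ) (hμ : 0 ≤ μ) (hp : ConcaveOn ℝ (Icc 0 τ) p) (hmono : MonotoneOn p (Ici 0))
    (hp0 : p 0 = 0) (hhat : tauhat ∈ Icc 0 τ) (x : ι → ℝ) :
    ⨅ t, (p |t| + θ * |t| ^ q + μ * |t - tauhat| ^ q) ≤
      θ * |∑ j, x j| ^ q + μ * |∑ j, x j - tauhat| ^ q + ∑ j, p |x j| := by
  have hterm : ∀ t, 0 ≤ θ * |t| ^ q ∧ 0 ≤ μ * |t - tauhat| ^ q := fun t =>
    ⟨mul_nonneg hθ (by positivity), mul_nonneg hμ (by positivity)⟩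
  have hbdd : BddBelow (range fun t => p |t| + θ * |t| ^ q + μ * |t - tauhat| ^ q) := by
    refine ⟨0, forall_mem_range.2 fun t => ?_⟩
    have := hp0 ▸ hmono self_mem_Ici (abs_nonneg t) (abs_nonneg t)
    linarith [hterm t]
  set s := ∑ j, x j
  have hsum : |s| ≤ ∑ j, |x j| := abs_sum_le_sum_abs _ _
  have hmap := fun a (ha : a ∈ Icc 0 τ) (has : a ≤ ∑ j, |x j|) =>
    hp.map_le_sum_of_le_sum hmono hp0 univ (fun j => abs_nonneg (x j)) ha has
  rcases le_total |s| tauhat with hs | hs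
  · refine (ciInf_le hbdd s).trans ?_
    linarith [hmap |s| ⟨abs_nonneg s, hs.trans hhat.2⟩ hsum]
  · -- beyond `tauhat`, the candidate `t = tauhat` kills the `μ`-term
    refine (ciInf_le hbdd tauhat).trans ?_
    have hpow : |tauhat| ^ q ≤ |s| ^ q :=
      Real.rpow_le_rpow (abs_nonneg _) (by rwa [abs_of_nonneg hhat.1]) hq.le
    simp only [abs_of_nonneg hhat.1, sub_self, abs_zero, Real.zero_rpow hq.ne', mul_zero,
      add_zero] at hpow ⊢
    linarith [hmap tauhat hhat (hs.trans hsum), mul_le_mul_of_nonneg_left hpow hθ, hterm s]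

end Penalty

theorem stmt_15_general (q : ℝ) (hq : 1 ≤ q) (lam : ℝ) (hlam : 0 < lam)
    (θ μ : ℝ) (hθ : 0 ≤ θ) (hμ : 0 ≤ μ)
    (p : ℝ → ℝ) (τ tauhat : ℝ) (hhat : tauhat ∈ Set.Ioo 0 τ)
    (hp0 : p 0 = 0)
    (hmono : MonotoneOn p (Set.Ici 0))
    (hconc : ConcaveOn ℝ (Set.Icc 0 τ) p)
    (n m : ℕ) [NeZero m]
    (b : Fin n → ℝ) (x : Fin n → Fin m → ℝ) :
    (n : ℝ) * lam * (⨅ s : ℝ, (p |s| + θ * |s| ^ q + μ * |s - tauhat| ^ q)) ≤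
      Fobj q lam θ μ tauhat p n m b x := by
  have hrows := Finset.sum_le_sum fun i (_ : i ∈ Finset.univ) =>
    iInf_penalty_le_of_sum (zero_lt_one.trans_le hq) hθ hμ hconc hmono hp0
      (Ioo_subset_Icc_self hhat) (x i)
  simp only [sum_const, card_univ, Fintype.card_fin, nsmul_eq_mul, sum_add_distrib,
    ← mul_sum] at hrows
  have hfit : 0 ≤ ∑ j ∈ univ.erase (0 : Fin m), |∑ i, b i * x i j - ∑ i, b i * x i 0| ^ q :=
    sum_nonneg fun _ _ => by positivity
  unfold Fobj
  linarith [mul_le_mul_of_nonneg_left hrows hlam.le]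

/-- Inequality (Eq:P_min_value) in the proof of Theorem 1:
`F x ≥ n·λ·h` where `h = ⨅ t, (p |t| + θ·|t|^q + μ·|t − τ̂|^q)`. -/
theorem stmt_15 (q : ℝ) (hq : 1 ≤ q) (lam : ℝ) (hlam : 0 < lam)
    (θ μ : ℝ) (hθ : 0 ≤ θ) (hμ : 0 ≤ μ)
    (p : ℝ → ℝ) (τ tauhat : ℝ) (hτ : 0 < τ) (hhat : tauhat ∈ Set.Ioo 0 τ)
    (hp0 : p 0 = 0)
    (hmono : MonotoneOn p (Set.Ici 0))
    (hconc : ConcaveOn ℝ (Set.Icc 0 τ) p)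
    (n m : ℕ) (hn : 0 < n) [NeZero m] (hm : 2 ≤ m)
    (b : Fin n → ℝ) (x : Fin n → Fin m → ℝ) :
    (n : ℝ) * lam * (⨅ s : ℝ, (p |s| + θ * |s| ^ q + μ * |s - tauhat| ^ q)) ≤
      Fobj q lam θ μ tauhat p n m b x :=
  stmt_15_general q hq lam hlam θ μ hθ hμ p τ tauhat hhat hp0 hmono hconc n m b x
end

section
/- Let q ≥ 1, λ > 0, θ, μ ≥ 0, and let p : ℝ → ℝ satisfy p(0) = 0, p non-decreasing on [0,∞), and p concave on [0,τ] for some τ > 0, with τ̂ ∈ (0,τ) fixed. Define g_{θ,μ}(t) := p(|t|) + θ·|t|^q + μ·|t − τ̂|^q, and assume g_{θ,μ} attains its global minimum h over ℝ at some point t*. Let n, m be positive integers with m ≥ 2, let b_1, …, b_n be reals, and suppose {1, …, n} is partitioned into m pairwise disjoint sets S_1, …, S_m with Σ_{i∈S_j} b_i = B for every j. Define x ∈ ℝ^{n×m} by x_{ij} := t* if i ∈ S_j and x_{ij} := 0 otherwise, and let F be as follows: F(x) := Σ_{j=2}^m |Σ_{i=1}^n b_i x_{ij} − Σ_{i=1}^n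 b_i x_{i1}|^q + λθ·Σ_{i=1}^n |Σ_{j=1}^m x_{ij}|^q + λμ·Σ_{i=1}^n |Σ_{j=1}^m x_{ij} − τ̂|^q + λ·Σ_{i=1}^n Σ_{j=1}^m p(|x_{ij}|). Then F(x) = n·λ·h; in particular, x is a global minimizer of F and the minimum value of F over ℝ^{n×m} equals n·λ·h. -/
/-!
Up to the factor `λ`, row `i` of a point `y` contributes
`θ·|Σⱼ yᵢⱼ|^q + μ·|Σⱼ yᵢⱼ − τ̂|^q + Σⱼ p |yᵢⱼ|` to `F`, and the remaining balance terms are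
nonnegative. Clamping the row sum to some `t ∈ [-τ, τ]` decreases `|t|` and `|t − τ̂|`, while
monotonicity and concavity of `p` with `p 0 = 0` give `p (min (Σⱼ aⱼ) τ) ≤ Σⱼ p aⱼ` for
`aⱼ ≥ 0`; so every row costs at least `g_{θ,μ}(t) ≥ h`. At the partition point every row has
exactly one nonzero entry `t*`, so it costs exactly `h`, and every column has `b`-weighted sum
`B·t*`, so the balance terms vanish.
-/

open Finset

lemma ConcaveOn.mul_apply_le_mul_apply {f : ℝ → ℝ} {τ a c : ℝ}
    (hf : ConcaveOn ℝ (Set.Icc 0 τ) f) (hf0 : 0 ≤ f 0) (ha : 0 ≤ a) (hac : a ≤ c)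
    (hcτ : c ≤ τ) : a * f c ≤ c * f a := by
  rcases (ha.trans hac).eq_or_lt with rfl | hc
  · simp [le_antisymm hac ha]
  have hconc := hf.2 (x := c) (y := 0) ⟨ha.trans hac, hcτ⟩ ⟨le_rfl, ha.trans (hac.trans hcτ)⟩
    (div_nonneg ha hc.le) (sub_nonneg.2 ((div_le_one hc).2 hac)) (by ring)
  simp only [smul_eq_mul, mul_zero, add_zero, div_mul_cancel₀ _ hc.ne'] at hconc
  have hweight : 0 ≤ (1 - a / c) * f 0 := mul_nonneg (sub_nonneg.2 ((div_le_one hc).2 hac)) hf0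
  calc a * f c = c * (a / c * f c) := by field_simp
    _ ≤ c * f a := mul_le_mul_of_nonneg_left (by linarith) hc.le

lemma le_sum_min_of_le_sum {ι : Type*} {s : Finset ι} {a : ι → ℝ} {c : ℝ}
    (ha : ∀ j ∈ s, 0 ≤ a j) (hc : 0 ≤ c) (hcs : c ≤ ∑ j ∈ s, a j) :
    c ≤ ∑ j ∈ s, min (a j) c := by
  by_cases hall : ∀ j ∈ s, a j ≤ c
  · rwa [sum_congr rfl fun j hj => min_eq_left (hall j hj)]
  · push Not at hall
    obtain ⟨j, hj, hcj⟩ := hall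
    calc c = min (a j) c := (min_eq_right hcj.le).symm
      _ ≤ ∑ j ∈ s, min (a j) c := single_le_sum (fun j hj => le_min (ha j hj) hc) hj

section Subadditivity

variable {p : ℝ → ℝ} {τ : ℝ}

theorem map_min_sum_le_sum_map {ι : Type*} (s : Finset ι) (hτ : 0 ≤ τ) (hp0 : p 0 = 0)
    (hmono : MonotoneOn p (Set.Ici 0)) (hconc : ConcaveOn ℝ (Set.Icc 0 τ) p)
    {a : ι → ℝ} (ha : ∀ j ∈ s, 0 ≤ a j) :
    p (min (∑ j ∈ s, a j) τ) ≤ ∑ j ∈ s, p (a j) := by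
  have hp_nonneg : ∀ u, 0 ≤ u → 0 ≤ p u := fun u hu => hp0 ▸ hmono (Set.mem_Ici.2 le_rfl) hu hu
  set c := min (∑ j ∈ s, a j) τ
  have hc : 0 ≤ c := le_min (sum_nonneg ha) hτ
  -- the chord of `p` from `0` to `c` lies below `p` on `[0, c]`, and `p ≥ p c` beyond `c`
  have hchord : ∀ j ∈ s, min (a j) c * p c ≤ c * p (a j) := by
    intro j hj
    rcases le_total (a j) c with h | h
    · rw [min_eq_left h]
      exact hconc.mul_apply_le_mul_apply hp0.ge (ha j hj) h (min_le_right _ _)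
    · rw [min_eq_right h]
      exact mul_le_mul_of_nonneg_left (hmono hc (hc.trans h) h) hc
  have hmul : c * p c ≤ c * ∑ j ∈ s, p (a j) :=
    calc c * p c ≤ (∑ j ∈ s, min (a j) c) * p c :=
          mul_le_mul_of_nonneg_right (le_sum_min_of_le_sum ha hc (min_le_left _ _))
            (hp_nonneg c hc)
      _ = ∑ j ∈ s, min (a j) c * p c := sum_mul _ _ _
      _ ≤ ∑ j ∈ s, c * p (a j) := sum_le_sum hchord
      _ = c * ∑ j ∈ s, p (a j) := (mul_sum _ _ _).symm
  rcases hc.eq_or_lt with hc0 | hcpos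
  · rw [← hc0, hp0]
    exact sum_nonneg fun j hj => hp_nonneg _ (ha j hj)
  · exact le_of_mul_le_mul_left hmul hcpos

end Subadditivity

lemma exists_abs_le_abs_sub_le {τ τ' : ℝ} (hτ' : τ' ∈ Set.Icc (-τ) τ) (s : ℝ) :
    ∃ t, |t| ≤ |s| ∧ |t| ≤ τ ∧ |t - τ'| ≤ |s - τ'| := by
  obtain ⟨h₁, h₂⟩ := hτ'
  rcases le_total s τ with hs | hs
  · rcases le_total (-τ) s with hs' | hs'
    · exact ⟨s, le_rfl, abs_le.2 ⟨hs', hs⟩, le_rfl⟩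
    · exact ⟨-τ, abs_le_abs_of_nonpos (by linarith) hs', abs_le.2 ⟨le_rfl, by linarith⟩,
        abs_le_abs_of_nonpos (by linarith) (by linarith)⟩
  · exact ⟨τ, abs_le_abs_of_nonneg (by linarith) hs, abs_le.2 ⟨by linarith, le_rfl⟩,
      abs_le_abs_of_nonneg (by linarith) (by linarith)⟩

noncomputable def rowCost (p : ℝ → ℝ) (θ μ q tauhat : ℝ) {ι : Type*} [Fintype ι]
    (y : ι → ℝ) : ℝ :=
  θ * |∑ j, y j| ^ q + μ * |(∑ j, y j) - tauhat| ^ q + ∑ j, p |y j|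

section RowCost

variable {p : ℝ → ℝ} {θ μ q tauhat : ℝ} {ι : Type*} [Fintype ι]

lemma rowCost_ite_of_existsUnique (hp0 : p 0 = 0) {P : ι → Prop} [DecidablePred P]
    (hP : ∃! j, P j) (t : ℝ) :
    rowCost p θ μ q tauhat (fun j => if P j then t else 0) = gfun p θ μ q tauhat t := by
  obtain ⟨j₀, hj₀, huniq⟩ := hP
  have hsum : ∀ f : ℝ → ℝ, f 0 = 0 → ∑ j, f (if P j then t else 0) = f t := fun f hf0 => by
    rw [Fintype.sum_eq_single j₀ fun j hj => by rw [if_neg fun h => hj (huniq j h), hf0],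
      if_pos hj₀]
  have hid := hsum id rfl
  have hp := hsum (fun u => p |u|) (by simp [hp0])
  simp only [id_eq] at hid hp
  rw [rowCost, gfun, hid, hp]
  ring

-- the witness is the row sum clamped to `[-τ, τ]`
lemma exists_gfun_le_rowCost {τ : ℝ} (hq : 0 ≤ q) (hθ : 0 ≤ θ) (hμ : 0 ≤ μ) (hτ : 0 ≤ τ)
    (hhat : tauhat ∈ Set.Icc (-τ) τ) (hp0 : p 0 = 0) (hmono : MonotoneOn p (Set.Ici 0))
    (hconc : ConcaveOn ℝ (Set.Icc 0 τ) p) (y : ι → ℝ) :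
    ∃ t, gfun p θ μ q tauhat t ≤ rowCost p θ μ q tauhat y := by
  obtain ⟨t, hts, htτ, hthat⟩ := exists_abs_le_abs_sub_le hhat (∑ j, y j)
  refine ⟨t, ?_⟩
  have hle : |t| ≤ min (∑ j, |y j|) τ := le_min (hts.trans (abs_sum_le_sum_abs _ _)) htτ
  have hp : p |t| ≤ ∑ j, p |y j| :=
    calc p |t| ≤ p (min (∑ j, |y j|) τ) := hmono (abs_nonneg t) ((abs_nonneg t).trans hle) hle
      _ ≤ ∑ j, p |y j| := map_min_sum_le_sum_map _ hτ hp0 hmono hconc fun j _ => abs_nonneg _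
  have hθt : θ * |t| ^ q ≤ θ * |∑ j, y j| ^ q := by gcongr
  have hμt : μ * |t - tauhat| ^ q ≤ μ * |(∑ j, y j) - tauhat| ^ q := by gcongr
  rw [gfun, rowCost]
  linarith

end RowCost

lemma Fobj_eq_add_sum_rowCost (q lam θ μ tauhat : ℝ) (p : ℝ → ℝ) (n m : ℕ) [NeZero m]
    (b : Fin n → ℝ) (x : Fin n → Fin m → ℝ) :
    Fobj q lam θ μ tauhat p n m b x =
      (∑ j ∈ univ.erase (0 : Fin m), |(∑ i, b i * x i j) - ∑ i, b i * x i 0| ^ q) +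
        lam * ∑ i, rowCost p θ μ q tauhat (x i) := by
  simp only [Fobj, rowCost, sum_add_distrib, mul_add, mul_sum, mul_assoc]
  ring

theorem stmt_16_general (q : ℝ) (hq : 1 ≤ q) (lam : ℝ) (hlam : 0 < lam)
    (θ μ : ℝ) (hθ : 0 ≤ θ) (hμ : 0 ≤ μ)
    (p : ℝ → ℝ) (τ tauhat : ℝ) (hτ : 0 < τ) (hhat : tauhat ∈ Set.Ioo 0 τ)
    (hp0 : p 0 = 0)
    (hmono : MonotoneOn p (Set.Ici 0))
    (hconc : ConcaveOn ℝ (Set.Icc 0 τ) p)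
    (tstar : ℝ)
    (hmin : ∀ t : ℝ, gfun p θ μ q tauhat tstar ≤ gfun p θ μ q tauhat t)
    (n m : ℕ) [NeZero m]
    (b : Fin n → ℝ) (B : ℝ)
    (S : Fin m → Finset (Fin n))
    (hpart : ∀ i : Fin n, ∃! j : Fin m, i ∈ S j)
    (hequit : ∀ j : Fin m, ∑ i ∈ S j, b i = B)
    (x : Fin n → Fin m → ℝ)
    (hx : ∀ i j, x i j = if i ∈ S j then tstar else 0) :
    Fobj q lam θ μ tauhat p n m b x = (n : ℝ) * lam * gfun p θ μ q tauhat tstar ∧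
      ∀ y : Fin n → Fin m → ℝ,
        (n : ℝ) * lam * gfun p θ μ q tauhat tstar ≤ Fobj q lam θ μ tauhat p n m b y := by
  have hcol : ∀ j, ∑ i, b i * x i j = B * tstar := fun j => by
    simp_rw [hx, mul_ite, mul_zero, sum_ite_mem, univ_inter, ← sum_mul, hequit j]
  have hrow : ∀ i, rowCost p θ μ q tauhat (x i) = gfun p θ μ q tauhat tstar := fun i => by
    rw [show x i = _ from funext (hx i)]
    exact rowCost_ite_of_existsUnique hp0 (hpart i) tstar
  refine ⟨?_, fun y => ?_⟩
  · simp only [Fobj_eq_add_sum_rowCost, hcol, hrow, sub_self, abs_zero,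
      Real.zero_rpow (by positivity : q ≠ 0), sum_const_zero, sum_const, card_univ,
      Fintype.card_fin, nsmul_eq_mul]
    ring
  · have hrows : ∀ i, gfun p θ μ q tauhat tstar ≤ rowCost p θ μ q tauhat (y i) := fun i => by
      obtain ⟨t, ht⟩ := exists_gfun_le_rowCost (zero_le_one.trans hq) hθ hμ hτ.le
        ⟨by linarith [hhat.1], hhat.2.le⟩ hp0 hmono hconc (y i)
      exact (hmin t).trans ht
    have hbalance : 0 ≤ ∑ j ∈ univ.erase (0 : Fin m),
        |(∑ i, b i * y i j) - ∑ i, b i * y i 0| ^ q := sum_nonneg fun _ _ => by positivity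
    calc (n : ℝ) * lam * gfun p θ μ q tauhat tstar
        = lam * ∑ _i : Fin n, gfun p θ μ q tauhat tstar := by
          simp only [sum_const, card_univ, Fintype.card_fin, nsmul_eq_mul]; ring
      _ ≤ lam * ∑ i, rowCost p θ μ q tauhat (y i) := by gcongr with i; exact hrows i
      _ ≤ Fobj q lam θ μ tauhat p n m b y := by rw [Fobj_eq_add_sum_rowCost]; linarith

/-- Forward direction of the correctness of the reduction in the proof of Theorem 1:
given an equitable partition `S₁, …, S_m` of `{1, …, n}` (each with `b`-sum `B`), the
point `x` with `x i j = t*` if `i ∈ S j` and `0` otherwise satisfies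
`F x = n·λ·h`; in particular `x` is a global minimizer of `F`, whose minimum value is
`n·λ·h`, where `h = g_{θ,μ}(t*)` is the global minimum of `g_{θ,μ}` attained at `t*`. -/
theorem stmt_16 (q : ℝ) (hq : 1 ≤ q) (lam : ℝ) (hlam : 0 < lam)
    (θ μ : ℝ) (hθ : 0 ≤ θ) (hμ : 0 ≤ μ)
    (p : ℝ → ℝ) (τ tauhat : ℝ) (hτ : 0 < τ) (hhat : tauhat ∈ Set.Ioo 0 τ)
    (hp0 : p 0 = 0)
    (hmono : MonotoneOn p (Set.Ici 0))
    (hconc : ConcaveOn ℝ (Set.Icc 0 τ) p)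
    (tstar : ℝ)
    (hmin : ∀ t : ℝ, gfun p θ μ q tauhat tstar ≤ gfun p θ μ q tauhat t)
    (n m : ℕ) (hn : 0 < n) [NeZero m] (hm : 2 ≤ m)
    (b : Fin n → ℝ) (B : ℝ)
    (S : Fin m → Finset (Fin n))
    (hpart : ∀ i : Fin n, ∃! j : Fin m, i ∈ S j)
    (hequit : ∀ j : Fin m, ∑ i ∈ S j, b i = B)
    (x : Fin n → Fin m → ℝ)
    (hx : ∀ i j, x i j = if i ∈ S j then tstar else 0) :
    Fobj q lam θ μ tauhat p n m b x = (n : ℝ) * lam * gfun p θ μ q tauhat tstar ∧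
      ∀ y : Fin n → Fin m → ℝ,
        (n : ℝ) * lam * gfun p θ μ q tauhat tstar ≤ Fobj q lam θ μ tauhat p n m b y :=
  stmt_16_general q hq lam hlam θ μ hθ hμ p τ tauhat hτ hhat hp0 hmono hconc tstar hmin n m b B S
    hpart hequit x hx
end
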